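/- arXiv:2212.09343 — 4 statements merged into one kernel-verified Lean document; each statement's English description precedes it below -/
import Mathlib

section
/- Let H be any orientation of a path or of a cycle with an odd number of edges. Then every antisymmetric kernel U satisfies t(H,U) = 0. -/
open MeasureTheory
open scoped Classical

/-- An oriented graph on a finite vertex type `V`: at most one of `(v,w)`, `(w,v)` is an edge. -/
structure OrientedGraph (V : Type) [Fintype V] where
  edges : Finset (V × V)
  irrefl : ∀ e ∈ edges, e.1 ≠ e.2
  antisymm : ∀ v w : V, (v, w) ∈ edges → (w, v) ∉ edges

/-- The homomorphism density `t(H,U)` of an oriented graph `H` in a kernel `U`. -/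
noncomputable def homDensity {V : Type} [Fintype V] (H : OrientedGraph V)
    (U : ℝ → ℝ → ℝ) : ℝ :=
  ∫ x in Set.univ.pi (fun _ : V => Set.Icc (0 : ℝ) 1),
    ∏ e ∈ H.edges, U (x e.1) (x e.2)

/-- A kernel (bounded measurable) which is antisymmetric on `[0,1]²`. -/
def IsAntisymmetricKernel (U : ℝ → ℝ → ℝ) : Prop :=
  Measurable (Function.uncurry U) ∧
  (∃ M : ℝ, ∀ x ∈ Set.Icc (0 : ℝ) 1, ∀ y ∈ Set.Icc (0 : ℝ) 1, |U x y| ≤ M) ∧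
  (∀ x ∈ Set.Icc (0 : ℝ) 1, ∀ y ∈ Set.Icc (0 : ℝ) 1, U x y = - U y x)

/-- A kernel with values in `[-1/2, 1/2]` on the unit square. -/
def BoundedByHalf (U : ℝ → ℝ → ℝ) : Prop :=
  ∀ x ∈ Set.Icc (0 : ℝ) 1, ∀ y ∈ Set.Icc (0 : ℝ) 1, |U x y| ≤ 1 / 2

/-- A tournamenton. -/
def IsTournamenton (W : ℝ → ℝ → ℝ) : Prop :=
  Measurable (Function.uncurry W) ∧
  (∀ x ∈ Set.Icc (0 : ℝ) 1, ∀ y ∈ Set.Icc (0 : ℝ) 1, 0 ≤ W x y ∧ W x y ≤ 1) ∧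
  (∀ x ∈ Set.Icc (0 : ℝ) 1, ∀ y ∈ Set.Icc (0 : ℝ) 1, W x y + W y x = 1)

/-- Lebesgue measure restricted to the unit square. -/
noncomputable def squareMeasure : Measure (ℝ × ℝ) :=
  MeasureTheory.volume.restrict ((Set.Icc (0 : ℝ) 1) ×ˢ (Set.Icc (0 : ℝ) 1))

/-- An oriented graph `H` is quasirandom-forcing if every tournamenton `W` with
`t(H,W) = 2^{-‖H‖}` equals `1/2` almost everywhere. -/
def QuasirandomForcing {V : Type} [Fintype V] (H : OrientedGraph V) : Prop :=
  ∀ W : ℝ → ℝ → ℝ, IsTournamenton W →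
    homDensity H W = (1 / 2 : ℝ) ^ H.edges.card →
    ∀ᵐ p : ℝ × ℝ ∂squareMeasure, W p.1 p.2 = 1 / 2

/-- `H` is an orientation of the path `0 - 1 - ⋯ - m` (with `m` edges). -/
def IsPathOrientation {m : ℕ} (H : OrientedGraph (Fin (m + 1))) : Prop :=
  (∀ e ∈ H.edges, e.2.val = e.1.val + 1 ∨ e.1.val = e.2.val + 1) ∧
  (∀ i : ℕ, i < m → ∃ e ∈ H.edges,
    (e.1.val = i ∧ e.2.val = i + 1) ∨ (e.2.val = i ∧ e.1.val = i + 1))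

/-- `C` is an orientation of the cycle `0 - 1 - ⋯ - (ℓ-1) - 0` of length `ℓ`. -/
def IsCycleOrientation {ℓ : ℕ} (C : OrientedGraph (Fin ℓ)) : Prop :=
  (∀ e ∈ C.edges, e.2.val = (e.1.val + 1) % ℓ ∨ e.1.val = (e.2.val + 1) % ℓ) ∧
  (∀ i : Fin ℓ, ∃ e ∈ C.edges,
    (e.1 = i ∧ e.2.val = (i.val + 1) % ℓ) ∨ (e.2 = i ∧ e.1.val = (i.val + 1) % ℓ))

/-- `Q_{2k}`: the orientation of the path with `2k` edges in which all edges are oriented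
away from the central vertex `k`; edges are `i+1 → i` for `i < k` and `i → i+1` for `k ≤ i`. -/
noncomputable def pathQ (k : ℕ) : OrientedGraph (Fin (2 * k + 1)) where
  edges := Finset.univ.filter fun e : Fin (2 * k + 1) × Fin (2 * k + 1) =>
    (e.2.val < k ∧ e.1.val = e.2.val + 1) ∨ (k ≤ e.1.val ∧ e.2.val = e.1.val + 1)
  irrefl := by
    intro e he heq
    simp only [Finset.mem_filter, Finset.mem_univ, true_and] at he
    have h : e.1.val = e.2.val := congrArg Fin.val heq
    omega
  antisymm := by
    intro v w hvw hwv
    simp only [Finset.mem_filter, Finset.mem_univ, true_and] at hvw hwv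
    omega

/-- `D_ℓ` (for even `ℓ = 2k`): the orientation of the cycle of length `ℓ` with all edges
oriented from vertex `0` towards vertex `k = ℓ/2`. -/
noncomputable def cycD (ℓ : ℕ) : OrientedGraph (Fin ℓ) where
  edges := Finset.univ.filter fun e : Fin ℓ × Fin ℓ =>
    (e.1.val < ℓ / 2 ∧ e.2.val = e.1.val + 1) ∨
    (ℓ / 2 ≤ e.2.val ∧ e.1.val = e.2.val + 1) ∨
    (2 ≤ ℓ ∧ e.1.val = 0 ∧ e.2.val = ℓ - 1)
  irrefl := by
    intro e he heq
    simp only [Finset.mem_filter, Finset.mem_univ, true_and] at he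
    have h : e.1.val = e.2.val := congrArg Fin.val heq
    have h1 := e.1.isLt
    omega
  antisymm := by
    intro v w hvw hwv
    simp only [Finset.mem_filter, Finset.mem_univ, true_and] at hvw hwv
    have h1 := v.isLt
    have h2 := w.isLt
    omega

/-- The disjoint union `Q_{2 n 0} ∪ ⋯ ∪ Q_{2 n (k-1)}`. -/
noncomputable def QUnion (k : ℕ) (n : Fin k → ℕ) :
    OrientedGraph ((i : Fin k) × Fin (2 * n i + 1)) where
  edges := Finset.univ.filter fun e =>
    e.1.1 = e.2.1 ∧
      ((e.2.2.val < n e.1.1 ∧ e.1.2.val = e.2.2.val + 1) ∨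
       (n e.1.1 ≤ e.1.2.val ∧ e.2.2.val = e.1.2.val + 1))
  irrefl := by
    intro e he heq
    simp only [Finset.mem_filter, Finset.mem_univ, true_and] at he
    have h : e.1.2.val = e.2.2.val := by rw [heq]
    omega
  antisymm := by
    intro v w hvw hwv
    simp only [Finset.mem_filter, Finset.mem_univ, true_and] at hvw hwv
    have h : n v.1 = n w.1 := by rw [hvw.1]
    omega

/-- `F` (a set of edges on the vertex set `W`) can be obtained from the oriented graph `H`
by reversing a set `R` of edges of `H` whose cardinality satisfies `r`, and possibly adding
isolated vertices (the injection `φ` embeds the vertices of `H`). -/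
def ObtainedBy {V W : Type} [Fintype V] [DecidableEq V] [Fintype W] [DecidableEq W]
    (H : OrientedGraph V) (F : Finset (W × W)) (r : ℕ → Prop) : Prop :=
  ∃ φ : V → W, Function.Injective φ ∧
    ∃ R : Finset (V × V), R ⊆ H.edges ∧ r R.card ∧
      F = (H.edges \ R).image (fun e => (φ e.1, φ e.2)) ∪
          R.image (fun e => (φ e.2, φ e.1))

/-- The coefficient `α_C(2 n 0, …, 2 n (k-1))`: the number of edge subsets `F ⊆ E(C)` such
that the spanning subgraph `C⟨F⟩` is obtained from `Q_{2 n 0} ∪ ⋯ ∪ Q_{2 n (k-1)}` by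
reversing an even number of edges and adding isolated vertices, minus the number of those
obtained by reversing an odd number of edges. -/
noncomputable def alphaCoeff {ℓ : ℕ} (C : OrientedGraph (Fin ℓ)) {k : ℕ}
    (n : Fin k → ℕ) : ℤ :=
  ((C.edges.powerset.filter fun F => ObtainedBy (QUnion k n) F Even).card : ℤ) -
  ((C.edges.powerset.filter fun F => ObtainedBy (QUnion k n) F Odd).card : ℤ)

/-- `γ_C`: equal to `1` if `C` can be obtained from `D_ℓ` by reversing an even number of
edges, and `-1` otherwise. -/
noncomputable def gammaCoeff {ℓ : ℕ} (C : OrientedGraph (Fin ℓ)) : ℤ :=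
  if ObtainedBy (cycD ℓ) C.edges Even then 1 else -1

/-!
Antisymmetry of `U` lets one replace `H` by any other orientation of its underlying graph, at
the cost of a sign. If a permutation `σ` of the vertices reverses every edge of some orientation
(up to permuting the edges), the substitution `x ↦ x ∘ σ` preserves the cube and multiplies the
integrand by `(-1)^‖H‖`; for an odd number of edges the density is therefore its own negative.
The reflection `i ↦ m - i` of the path `0 → 1 → ⋯ → m` and the reflection `i ↦ -i` of the
cycle `i → i + 1` on `ℤ/ℓ` are such permutations.
-/

theorem setIntegral_univ_pi_eq_zero_of_comp_perm_eq_neg {ι : Type*} [Fintype ι]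
    {s : Set ℝ} (hs : MeasurableSet s) (σ : Equiv.Perm ι) (f : (ι → ℝ) → ℝ)
    (hf : ∀ x ∈ Set.univ.pi fun _ => s, f (x ∘ σ) = -f x) :
    ∫ x in Set.univ.pi (fun _ => s), f x = 0 := by
  set S := Set.univ.pi fun _ : ι => s
  let E := MeasurableEquiv.arrowCongr' σ.symm (MeasurableEquiv.refl ℝ)
  have hE : ∀ x, E x = x ∘ σ := fun _ => rfl
  have hpre : E ⁻¹' S = S := by
    ext x
    simp only [S, Set.mem_preimage, hE, Set.mem_univ_pi, Function.comp_apply]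
    exact ⟨fun h i => by simpa using h (σ.symm i), fun h i => h _⟩
  have hsub : ∫ x in S, f x = ∫ x in S, f (E x) := by
    conv_rhs => rw [← hpre]
    have hE_vol : MeasurePreserving E :=
      volume_preserving_arrowCongr' _ _ (MeasurePreserving.id volume)
    exact (hE_vol.setIntegral_preimage_emb E.measurableEmbedding f S).symm
  have hneg : ∫ x in S, f (E x) = -∫ x in S, f x := by
    rw [← integral_neg]
    exact setIntegral_congr_fun (MeasurableSet.univ_pi fun _ => hs) fun x hx => hf x hx
  linarith

theorem prod_comp_perm_eq_neg_of_odd {V ι R : Type*} [Fintype ι] [CommRing R]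
    (p : ι → V × V) (g : V → V → R) (hg : ∀ v w, g w v = -g v w)
    (σ : Equiv.Perm V) (τ : Equiv.Perm ι)
    (hστ : ∀ i, p (τ i) = (σ (p i).2, σ (p i).1)) (hodd : Odd (Fintype.card ι)) :
    ∏ i, g (σ (p i).1) (σ (p i).2) = -∏ i, g (p i).1 (p i).2 :=
  calc ∏ i, g (σ (p i).1) (σ (p i).2) = ∏ i, g (p (τ i)).2 (p (τ i)).1 := by simp only [hστ]
    _ = ∏ i, g (p i).2 (p i).1 := Equiv.prod_comp τ fun i => g (p i).2 (p i).1
    _ = ∏ i, (-1) * g (p i).1 (p i).2 := Finset.prod_congr rfl fun i _ => by rw [hg, neg_one_mul]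
    _ = -∏ i, g (p i).1 (p i).2 := by
      rw [Finset.prod_mul_distrib, Finset.prod_const, Finset.card_univ, hodd.neg_one_pow,
        neg_one_mul]

namespace OrientedGraph

variable {V ι : Type} [Fintype V] [Fintype ι]

/-- `p` lists the edges of the underlying graph of `H`, each exactly once. -/
def IsOrientationOf (H : OrientedGraph V) (p : ι → V × V) : Prop :=
  Function.Injective (fun i => s((p i).1, (p i).2)) ∧
    H.edges.image (fun e => s(e.1, e.2)) = Finset.univ.image fun i => s((p i).1, (p i).2)

theorem prod_edges_eq_sign_mul_prod {R : Type*} [CommRing R] {H : OrientedGraph V}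
    {p : ι → V × V} (hp : H.IsOrientationOf p) (g : V → V → R)
    (hg : ∀ v w, g w v = -g v w) :
    ∏ e ∈ H.edges, g e.1 e.2 =
      (∏ i, if p i ∈ H.edges then 1 else -1) * ∏ i, g (p i).1 (p i).2 := by
  have swap_mem_of_not_mem : ∀ i, p i ∉ H.edges → (p i).swap ∈ H.edges := by
    intro i hi
    obtain ⟨e, he, hep⟩ := Finset.mem_image.1 <|
      hp.2 ▸ Finset.mem_image_of_mem (fun i => s((p i).1, (p i).2)) (Finset.mem_univ i)
    rcases Sym2.mk_eq_mk_iff.1 hep with rfl | rfl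
    exacts [absurd he hi, he]
  let orient (i : ι) : V × V := if p i ∈ H.edges then p i else (p i).swap
  have mk_orient : ∀ i, s((orient i).1, (orient i).2) = s((p i).1, (p i).2) := fun i => by
    by_cases hi : p i ∈ H.edges
    · simp only [orient, if_pos hi]
    · simp only [orient, if_neg hi]; exact Sym2.mk_eq_mk_iff.2 (Or.inr rfl)
  rw [← Finset.prod_mul_distrib, eq_comm]
  refine Finset.prod_bij (fun i _ => orient i) (fun i _ => ?_) (fun i _ j _ hij => ?_)
    (fun e he => ?_) (fun i _ => ?_)
  · by_cases hi : p i ∈ H.edges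
    · simpa only [orient, if_pos hi] using hi
    · simpa only [orient, if_neg hi] using swap_mem_of_not_mem i hi
  · exact hp.1 (by simpa only [mk_orient] using congrArg (fun e : V × V => s(e.1, e.2)) hij)
  · obtain ⟨i, -, hie⟩ := Finset.mem_image.1 <| hp.2 ▸
      Finset.mem_image_of_mem (fun e : V × V => s(e.1, e.2)) he
    refine ⟨i, Finset.mem_univ i, ?_⟩
    rcases Sym2.mk_eq_mk_iff.1 hie with rfl | hswap
    · simp only [orient, if_pos he]
    · have hi : p i ∉ H.edges := hswap ▸ H.antisymm e.1 e.2 he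
      simp only [orient, if_neg hi, hswap, Prod.swap_swap]
  · by_cases hi : p i ∈ H.edges
    · simp only [orient, if_pos hi, one_mul]
    · simp only [orient, if_neg hi, Prod.fst_swap, Prod.snd_swap, neg_one_mul]
      exact (hg _ _).symm

theorem homDensity_eq_zero_of_perm_reverses_edges {H : OrientedGraph V} {p : ι → V × V}
    (hp : H.IsOrientationOf p) {U : ℝ → ℝ → ℝ}
    (hU : ∀ x ∈ Set.Icc (0 : ℝ) 1, ∀ y ∈ Set.Icc (0 : ℝ) 1, U x y = -U y x)
    (σ : Equiv.Perm V) (τ : Equiv.Perm ι) (hστ : ∀ i, p (τ i) = (σ (p i).2, σ (p i).1))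
    (hodd : Odd (Fintype.card ι)) :
    homDensity H U = 0 := by
  set S := Set.univ.pi fun _ : V => Set.Icc (0 : ℝ) 1
  have hanti : ∀ x ∈ S, ∀ v w, U (x w) (x v) = -U (x v) (x w) := fun x hx v w =>
    hU _ (hx w trivial) _ (hx v trivial)
  have hprod : Set.EqOn (fun x => ∏ e ∈ H.edges, U (x e.1) (x e.2))
      (fun x => (∏ i, if p i ∈ H.edges then 1 else -1) * ∏ i, U (x (p i).1) (x (p i).2)) S :=
    fun x hx => prod_edges_eq_sign_mul_prod hp _ (hanti x hx)
  rw [homDensity, setIntegral_congr_fun (MeasurableSet.univ_pi fun _ => measurableSet_Icc) hprod,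
    integral_const_mul, setIntegral_univ_pi_eq_zero_of_comp_perm_eq_neg measurableSet_Icc σ _
      fun x hx => prod_comp_perm_eq_neg_of_odd p _ (hanti x hx) σ τ hστ hodd, mul_zero]

end OrientedGraph

theorem IsPathOrientation.isOrientationOf {m : ℕ} {H : OrientedGraph (Fin (m + 1))}
    (hH : IsPathOrientation H) :
    H.IsOrientationOf fun i : Fin m => (i.castSucc, i.succ) := by
  refine ⟨fun i j hij => ?_, Finset.ext fun z => ?_⟩
  · rw [Sym2.eq_iff] at hij
    simp only [Fin.ext_iff, Fin.val_castSucc, Fin.val_succ] at hij ⊢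
    omega
  simp only [Finset.mem_image, Finset.mem_univ, true_and]
  constructor
  · rintro ⟨e, he, rfl⟩
    have hadj := hH.1 e he
    refine ⟨⟨min e.1 e.2, by omega⟩, ?_⟩
    rw [Sym2.eq_iff]
    simp only [Fin.ext_iff, Fin.val_castSucc, Fin.val_succ]
    omega
  · rintro ⟨i, rfl⟩
    obtain ⟨e, he, hadj⟩ := hH.2 i i.isLt
    refine ⟨e, he, ?_⟩
    rw [Sym2.eq_iff]
    simp only [Fin.ext_iff, Fin.val_castSucc, Fin.val_succ]
    omega

theorem IsCycleOrientation.isOrientationOf {ℓ : ℕ} [NeZero ℓ] (hℓ : 3 ≤ ℓ)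
    {C : OrientedGraph (Fin ℓ)} (hC : IsCycleOrientation C) :
    C.IsOrientationOf fun i : Fin ℓ => (i, i + 1) := by
  have val_eq_iff : ∀ a b : Fin ℓ, b.val = (a.val + 1) % ℓ ↔ b = a + 1 := fun a b => by
    rw [Fin.ext_iff, Fin.val_add, Fin.val_one', Nat.add_mod_mod]
  have two_ne_zero : (1 + 1 : Fin ℓ) ≠ 0 := by
    rw [Ne, Fin.ext_iff, Fin.val_add, Fin.val_one', Nat.mod_eq_of_lt (by omega : 1 < ℓ),
      Nat.mod_eq_of_lt (by omega : 1 + 1 < ℓ)]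
    simp
  refine ⟨fun i j hij => ?_, Finset.ext fun z => ?_⟩
  · rcases Sym2.eq_iff.1 hij with ⟨h, -⟩ | ⟨rfl, h⟩
    · exact h
    · exact absurd (by simpa [add_assoc] using h) two_ne_zero
  simp only [Finset.mem_image, Finset.mem_univ, true_and]
  constructor
  · rintro ⟨e, he, rfl⟩
    rcases hC.1 e he with h | h
    · exact ⟨e.1, by rw [(val_eq_iff _ _).1 h]⟩
    · exact ⟨e.2, by rw [(val_eq_iff _ _).1 h, Sym2.eq_swap]⟩
  · rintro ⟨i, rfl⟩
    obtain ⟨e, he, ⟨rfl, h⟩ | ⟨rfl, h⟩⟩ := hC.2 i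
    · exact ⟨e, he, by rw [(val_eq_iff _ _).1 h]⟩
    · exact ⟨e, he, by rw [(val_eq_iff _ _).1 h, Sym2.eq_swap]⟩

/-- any orientation of a path or a cycle with an odd number of edges has
zero density in every antisymmetric kernel. -/
theorem density_odd_path_or_cycle_eq_zero (U : ℝ → ℝ → ℝ)
    (hU : IsAntisymmetricKernel U) :
    (∀ m : ℕ, Odd m → ∀ H : OrientedGraph (Fin (m + 1)), IsPathOrientation H →
      homDensity H U = 0) ∧
    (∀ ℓ : ℕ, 3 ≤ ℓ → Odd ℓ → ∀ C : OrientedGraph (Fin ℓ), IsCycleOrientation C →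
      homDensity C U = 0) := by
  obtain ⟨-, -, hanti⟩ := hU
  refine ⟨fun m hm H hH => ?_, fun ℓ hℓ hodd C hC => ?_⟩
  · refine OrientedGraph.homDensity_eq_zero_of_perm_reverses_edges hH.isOrientationOf hanti
      Fin.revPerm Fin.revPerm (fun i => ?_) (by simpa using hm)
    simp [Fin.rev_succ, Fin.rev_castSucc]
  · have : NeZero ℓ := ⟨by omega⟩
    refine OrientedGraph.homDensity_eq_zero_of_perm_reverses_edges (hC.isOrientationOf hℓ) hanti
      (Equiv.neg _) ((Equiv.addRight 1).trans (Equiv.neg _)) (fun i => ?_) (by simpa using hodd)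
    simp only [Equiv.trans_apply, Equiv.coe_addRight, Equiv.neg_apply, Prod.mk.injEq]
    exact ⟨trivial, by abel⟩
end

section
/- Let k ≥ 2 be an integer. Every antisymmetric kernel U satisfies t(D_{2k},U) ≥ 0, and t(D_{2k},U) = 0 holds if and only if U = 0 almost everywhere. -/
/-!
Both halves of `D_{2k}` are directed paths of length `k` from vertex `0` to vertex `k`, so
integrating out their interior vertices gives `t(D_{2k}, U) = ∫∫ U^{∘k}(a, b)² da db`, where
`U^{∘k}` is the kernel of the `k`-th power of the integral operator `T` of `U`; hence `t ≥ 0`.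
For antisymmetric `U` the operator `T` is skew-adjoint, so `‖T h‖² = -⟨h, T² h⟩`. Applied to the
columns of `U^{∘(j-1)}` this shows that `U^{∘(j+1)} = 0` forces `U^{∘j} = 0`, down to
`U^{∘2} = 0`. Then `T² = 0`, hence `T = 0`: for almost every `x`, `U(x, ·)` integrates to zero
over every interval with rational endpoints, so `U = 0` almost everywhere. To have global bounds
and antisymmetry, `U` is first replaced by its restriction to the unit square, extended by zero.
-/

open MeasureTheory
open scoped Classical

open Set Function

section BoundedMeasurable

variable {β γ : Type*} [MeasurableSpace β] [MeasurableSpace γ]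

def IsBoundedMeasurable (f : β → ℝ) : Prop :=
  Measurable f ∧ ∃ C, ∀ x, |f x| ≤ C

namespace IsBoundedMeasurable

variable {f g : β → ℝ}

theorem mul (hf : IsBoundedMeasurable f) (hg : IsBoundedMeasurable g) :
    IsBoundedMeasurable fun x => f x * g x := by
  obtain ⟨hfm, C, hC⟩ := hf
  obtain ⟨hgm, D, hD⟩ := hg
  refine ⟨hfm.mul hgm, C * D, fun x => ?_⟩
  rw [abs_mul]
  exact mul_le_mul (hC x) (hD x) (abs_nonneg _) ((abs_nonneg _).trans (hC x))

theorem comp (hf : IsBoundedMeasurable f) {φ : γ → β} (hφ : Measurable φ) :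
    IsBoundedMeasurable fun x => f (φ x) :=
  ⟨hf.1.comp hφ, hf.2.imp fun _ hC x => hC (φ x)⟩

theorem integrable (hf : IsBoundedMeasurable f) (μ : Measure β) [IsFiniteMeasure μ] :
    Integrable f μ :=
  let ⟨hfm, C, hC⟩ := hf
  .of_bound hfm.aestronglyMeasurable C (.of_forall hC)

theorem integral_prod_right {F : β × γ → ℝ} (hF : IsBoundedMeasurable F) (ν : Measure γ)
    [IsFiniteMeasure ν] : IsBoundedMeasurable fun x => ∫ y, F (x, y) ∂ν := by
  obtain ⟨hFm, C, hC⟩ := hF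
  refine ⟨hFm.stronglyMeasurable.integral_prod_right'.measurable, C * ν.real univ, fun x => ?_⟩
  exact norm_integral_le_of_norm_le_const
    (.of_forall fun y => (Real.norm_eq_abs _).trans_le (hC (x, y)))

end IsBoundedMeasurable

end BoundedMeasurable

section KernelOperator

variable {α : Type*} [MeasurableSpace α] {μ : Measure α} {U : α → α → ℝ}

noncomputable def kernelApply (μ : Measure α) (U : α → α → ℝ) (g : α → ℝ) (a : α) : ℝ :=
  ∫ c, U a c * g c ∂μ

/-- `kernelPow μ U n` is the kernel of the `(n + 1)`-st power of `kernelApply μ U`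
(the identity operator has no kernel). -/
noncomputable def kernelPow (μ : Measure α) (U : α → α → ℝ) : ℕ → α → α → ℝ
  | 0 => U
  | n + 1 => fun a b => kernelApply μ U (fun c => kernelPow μ U n c b) a

theorem kernelPow_succ_eq_zero_of_ae_eq_zero {a : α} (ha : ∀ᵐ c ∂μ, U a c = 0) (n : ℕ)
    (b : α) : kernelPow μ U (n + 1) a b = 0 :=
  integral_eq_zero_of_ae (ha.mono fun c hc => by simp [hc])

variable [IsFiniteMeasure μ]

theorem IsBoundedMeasurable.kernelApply (hU : IsBoundedMeasurable (uncurry U)) {g : α → ℝ}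
    (hg : IsBoundedMeasurable g) : IsBoundedMeasurable (kernelApply μ U g) :=
  (hU.mul (hg.comp measurable_snd)).integral_prod_right μ

theorem IsBoundedMeasurable.kernelPow (hU : IsBoundedMeasurable (uncurry U)) (n : ℕ) :
    IsBoundedMeasurable (uncurry (kernelPow μ U n)) := by
  induction n with
  | zero => exact hU
  | succ n ih =>
    exact ((hU.comp (measurable_fst.fst.prodMk measurable_snd)).mul
      (ih.comp (measurable_snd.prodMk measurable_fst.snd))).integral_prod_right μ

end KernelOperator

section PathProduct

variable {α : Type*} {U : α → α → ℝ}

/-- The weight `U a (w 0) * U (w 0) (w 1) * ⋯ * U (w (n - 1)) b` of the walk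
`a → w 0 → ⋯ → w (n - 1) → b`. -/
def pathProd (U : α → α → ℝ) : (n : ℕ) → α → (Fin n → α) → α → ℝ
  | 0, a, _, b => U a b
  | n + 1, a, w, b => U a (w 0) * pathProd U n (w 0) (Fin.tail w) b

theorem pathProd_eq_prod_range (U : α → α → ℝ) (n : ℕ) (v : ℕ → α) :
    pathProd U n (v 0) (fun i => v (i + 1)) (v (n + 1)) =
      ∏ i ∈ Finset.range (n + 1), U (v i) (v (i + 1)) := by
  induction n generalizing v with
  | zero => simp [pathProd]
  | succ n ih =>
    rw [Finset.prod_range_succ', ← ih (fun i => v (i + 1)), mul_comm]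
    rfl

variable [MeasurableSpace α] {μ : Measure α}

theorem IsBoundedMeasurable.pathProd (hU : IsBoundedMeasurable (uncurry U)) (n : ℕ) :
    IsBoundedMeasurable fun q : α × (Fin n → α) × α => pathProd U n q.1 q.2.1 q.2.2 := by
  induction n with
  | zero => exact hU.comp (φ := fun q : α × (Fin 0 → α) × α => (q.1, q.2.2)) (by fun_prop)
  | succ n ih =>
    exact (hU.comp (φ := fun q : α × (Fin (n + 1) → α) × α => (q.1, q.2.1 0)) (by fun_prop)).mul
      (ih.comp
        (φ := fun q : α × (Fin (n + 1) → α) × α => (q.2.1 0, fun i => q.2.1 i.succ, q.2.2))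
        (by fun_prop))

theorem integral_fin_cons [SigmaFinite μ] {n : ℕ} {f : (Fin (n + 1) → α) → ℝ}
    (hf : Integrable f (Measure.pi fun _ => μ)) :
    ∫ x, f x ∂(Measure.pi fun _ => μ) =
      ∫ a, ∫ w, f (Fin.cons a w) ∂(Measure.pi fun _ => μ) ∂μ := by
  set e := (MeasurableEquiv.piFinSuccAbove (fun _ : Fin (n + 1) => α) 0).symm
  have he : MeasurePreserving e _ _ :=
    (measurePreserving_piFinSuccAbove (fun _ : Fin (n + 1) => μ) 0).symm
  rw [← he.integral_comp', integral_prod (fun x => f (e x)) (he.integrable_comp_emb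
    e.measurableEmbedding |>.mpr hf)]
  simp [e, Fin.insertNthEquiv, Fin.insertNth_zero']

theorem integral_pathProd [IsFiniteMeasure μ] (hU : IsBoundedMeasurable (uncurry U)) (n : ℕ)
    (a b : α) : ∫ w, pathProd U n a w b ∂(Measure.pi fun _ => μ) = kernelPow μ U n a b := by
  induction n generalizing a with
  | zero => simp [pathProd, kernelPow, measureReal_def]
  | succ n ih =>
    rw [integral_fin_cons (f := fun w => pathProd U (n + 1) a w b)
      (((hU.pathProd (n + 1)).comp (φ := fun w => (a, w, b)) (by fun_prop)).integrable _)]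
    simp only [pathProd, Fin.cons_zero, Fin.tail_cons, integral_const_mul, ih]
    rfl

end PathProduct

section CycleDensity

open Fin.NatCast

variable {α : Type*}

theorem cycD_edges_eq (n : ℕ) :
    (cycD (2 * (n + 2))).edges =
      (Finset.range (n + 2)).image (fun i : ℕ =>
          ((i : Fin (2 * (n + 2))), ((i + 1 : ℕ) : Fin (2 * (n + 2))))) ∪
        (Finset.range (n + 2)).image (fun i : ℕ =>
          (((2 * (n + 2) - i : ℕ) : Fin (2 * (n + 2))),
            ((2 * (n + 2) - (i + 1) : ℕ) : Fin (2 * (n + 2))))) := by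
  ext ⟨u, v⟩
  have hu := u.isLt
  have hv := v.isLt
  simp only [cycD, Finset.mem_filter, Finset.mem_univ, true_and, Finset.mem_union,
    Finset.mem_image, Finset.mem_range, Prod.ext_iff, Fin.ext_iff, Fin.val_natCast]
  constructor
  · rintro (⟨h1, h2⟩ | ⟨h1, h2⟩ | ⟨-, h1, h2⟩)
    · exact Or.inl ⟨u, by omega, by simp (disch := omega) [Nat.mod_eq_of_lt, h2]⟩
    · refine Or.inr ⟨2 * (n + 2) - (v + 1), by omega, ?_⟩
      simp (disch := omega) [Nat.mod_eq_of_lt]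
      omega
    · refine Or.inr ⟨0, by omega, ?_⟩
      simp (disch := omega) [Nat.mod_eq_of_lt]
      omega
  · rintro (⟨i, hi, h1, h2⟩ | ⟨i, hi, h1, h2⟩)
    · simp (disch := omega) [Nat.mod_eq_of_lt] at h1 h2
      omega
    · rcases Nat.eq_zero_or_pos i with rfl | hi0
      · simp (disch := omega) [Nat.mod_eq_of_lt] at h1 h2
        omega
      · simp (disch := omega) [Nat.mod_eq_of_lt] at h1 h2
        omega

theorem prod_cycD_edges_eq_pathProd_mul_pathProd (U : α → α → ℝ) (n : ℕ)
    (x : Fin (2 * (n + 2)) → α) :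
    ∏ e ∈ (cycD (2 * (n + 2))).edges, U (x e.1) (x e.2) =
      pathProd U (n + 1) (x 0) (fun t => x ((t + 1 : ℕ) : Fin (2 * (n + 2))))
          (x ((n + 2 : ℕ) : Fin (2 * (n + 2)))) *
        pathProd U (n + 1) (x 0) (fun t => x ((2 * (n + 2) - (t + 1) : ℕ) : Fin (2 * (n + 2))))
          (x ((n + 2 : ℕ) : Fin (2 * (n + 2)))) := by
  have path1 := pathProd_eq_prod_range U (n + 1) (fun i : ℕ => x i)
  have path2 := pathProd_eq_prod_range U (n + 1) (fun i : ℕ => x ↑(2 * (n + 2) - i))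
  have hℓ : ((2 * (n + 2) - 0 : ℕ) : Fin (2 * (n + 2))) = 0 := by simp
  have hmid : ((2 * (n + 2) - (n + 1 + 1) : ℕ) : Fin (2 * (n + 2))) = ((n + 2 : ℕ) : Fin _) :=
    congrArg _ (by omega)
  simp only [Nat.cast_zero, hℓ, hmid] at path1 path2
  rw [path1, path2, cycD_edges_eq, Finset.prod_union, Finset.prod_image, Finset.prod_image]
  · intro i hi j hj h
    simp only [Finset.coe_range, mem_Iio, Prod.ext_iff, Fin.ext_iff, Fin.val_natCast] at hi hj h
    simp (disch := omega) only [Nat.mod_eq_of_lt] at h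
    omega
  · intro i hi j hj h
    simp only [Finset.coe_range, mem_Iio, Prod.ext_iff, Fin.ext_iff, Fin.val_natCast] at hi hj h
    simp (disch := omega) only [Nat.mod_eq_of_lt] at h
    omega
  · refine Finset.disjoint_left.mpr ?_
    rintro _ hi hj
    simp only [Finset.mem_image, Finset.mem_range] at hi hj
    obtain ⟨i, hi, rfl⟩ := hi
    obtain ⟨j, hj, h⟩ := hj
    simp only [Prod.ext_iff, Fin.ext_iff, Fin.val_natCast] at h
    rcases Nat.eq_zero_or_pos j with rfl | hj0 <;>
      simp (disch := omega) only [Nat.mod_eq_of_lt, Nat.sub_zero, Nat.mod_self] at h <;> omega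

variable [MeasurableSpace α] {μ : Measure α} [IsFiniteMeasure μ] {U : α → α → ℝ}

theorem integral_pathProd_mul_pathProd (hU : IsBoundedMeasurable (uncurry U)) (m : ℕ)
    (a b : α) :
    ∫ w : Fin m ⊕ Fin m → α, pathProd U m a (fun t => w (.inl t)) b *
        pathProd U m a (fun t => w (.inr t)) b ∂(Measure.pi fun _ => μ) =
      kernelPow μ U m a b ^ 2 := by
  rw [← (measurePreserving_sumPiEquivProdPi_symm fun _ : Fin m ⊕ Fin m => μ).integral_comp']
  simp only [MeasurableEquiv.coe_sumPiEquivProdPi_symm, Equiv.sumPiEquivProdPi_symm_apply]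
  rw [integral_prod_mul (μ := Measure.pi fun _ => μ) (ν := Measure.pi fun _ => μ)
    (fun w => pathProd U m a w b) (fun w => pathProd U m a w b), integral_pathProd hU, sq]

/-- Labels the vertices of `cycD (2 * (n + 2))` by the endpoints `0` and `n + 2` of its two
directed paths and by the interior vertices of each path. -/
def cycDVertex (n : ℕ) : Fin 2 ⊕ (Fin (n + 1) ⊕ Fin (n + 1)) → Fin (2 * (n + 2))
  | .inl j => ![0, ((n + 2 : ℕ) : Fin _)] j
  | .inr (.inl t) => ((t + 1 : ℕ) : Fin _)
  | .inr (.inr t) => ((2 * (n + 2) - (t + 1) : ℕ) : Fin _)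

theorem cycDVertex_bijective (n : ℕ) : Bijective (cycDVertex n) := by
  refine (Fintype.bijective_iff_surjective_and_card _).mpr ⟨fun u => ?_, by simp; omega⟩
  have hu := u.isLt
  by_cases h0 : (u : ℕ) = 0
  · exact ⟨.inl 0, Fin.ext (by simp [cycDVertex, h0])⟩
  by_cases hk : (u : ℕ) = n + 2
  · refine ⟨.inl 1, Fin.ext ?_⟩
    simp only [cycDVertex, Matrix.cons_val_one, Matrix.cons_val_fin_one]
    rw [Fin.val_cast_of_lt (by omega), hk]
  by_cases hlt : (u : ℕ) < n + 2
  · refine ⟨.inr (.inl ⟨u - 1, by omega⟩), Fin.ext ?_⟩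
    simp (disch := omega) [cycDVertex]
  · refine ⟨.inr (.inr ⟨2 * (n + 2) - 1 - u, by omega⟩), Fin.ext ?_⟩
    simp (disch := omega) [cycDVertex, Nat.mod_eq_of_lt]
    omega

theorem integral_prod_cycD_edges (hU : IsBoundedMeasurable (uncurry U)) (n : ℕ) :
    ∫ x, ∏ e ∈ (cycD (2 * (n + 2))).edges, U (x e.1) (x e.2) ∂(Measure.pi fun _ => μ) =
      ∫ p, kernelPow μ U (n + 1) p.1 p.2 ^ 2 ∂(μ.prod μ) := by
  set σ := Equiv.ofBijective _ (cycDVertex_bijective n)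
  have hreindex : ∀ y : Fin 2 ⊕ (Fin (n + 1) ⊕ Fin (n + 1)) → α,
      ∏ e ∈ (cycD (2 * (n + 2))).edges, U (MeasurableEquiv.piCongrLeft (fun _ => α) σ y e.1)
        (MeasurableEquiv.piCongrLeft (fun _ => α) σ y e.2) =
      pathProd U (n + 1) (y (.inl 0)) (fun t => y (.inr (.inl t))) (y (.inl 1)) *
        pathProd U (n + 1) (y (.inl 0)) (fun t => y (.inr (.inr t))) (y (.inl 1)) := fun y => by
    set x := MeasurableEquiv.piCongrLeft (fun _ => α) σ y
    have hy : y = fun i => x (cycDVertex n i) :=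
      funext fun i => (Equiv.piCongrLeft_apply_apply (fun _ => α) σ y i).symm
    clear_value x
    subst hy
    rw [prod_cycD_edges_eq_pathProd_mul_pathProd]
    rfl
  rw [← (measurePreserving_piCongrLeft (fun _ => μ) σ).integral_comp']
  simp only [hreindex]
  rw [← (measurePreserving_sumPiEquivProdPi_symm
    fun _ : Fin 2 ⊕ (Fin (n + 1) ⊕ Fin (n + 1)) => μ).integral_comp']
  have hpath : ∀ j : Fin (n + 1) → Fin 2 ⊕ (Fin (n + 1) ⊕ Fin (n + 1)),
      IsBoundedMeasurable fun y : Fin 2 ⊕ (Fin (n + 1) ⊕ Fin (n + 1)) → α =>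
        pathProd U (n + 1) (y (.inl 0)) (fun t => y (j t)) (y (.inl 1)) := fun j =>
    (hU.pathProd (n + 1)).comp (φ := fun y : _ → α => (y (.inl 0), fun t => y (j t), y (.inl 1)))
      (by fun_prop)
  have hpaths := (hpath fun t => .inr (.inl t)).mul (hpath fun t => .inr (.inr t))
  rw [integral_prod _
    ((hpaths.comp (MeasurableEquiv.sumPiEquivProdPi _).symm.measurable).integrable _)]
  simp only [MeasurableEquiv.coe_sumPiEquivProdPi_symm, Equiv.sumPiEquivProdPi_symm_apply,
    integral_pathProd_mul_pathProd hU]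
  rw [← (measurePreserving_finTwoArrow μ).integral_comp']
  rfl

end CycleDensity

section AntisymmetricKernel

variable {α : Type*} [MeasurableSpace α] {μ : Measure α} [IsFiniteMeasure μ] {U : α → α → ℝ}
  (hU : IsBoundedMeasurable (uncurry U)) (hanti : ∀ x y, U x y = -U y x)

include hU hanti

theorem integral_kernelApply_mul_of_antisymm {g w : α → ℝ} (hg : IsBoundedMeasurable g)
    (hw : IsBoundedMeasurable w) :
    ∫ a, kernelApply μ U g a * w a ∂μ = -∫ c, g c * kernelApply μ U w c ∂μ := by
  have hint : Integrable (uncurry fun a c => U a c * g c * w a) (μ.prod μ) :=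
    ((hU.mul (hg.comp measurable_snd)).mul (hw.comp measurable_fst)).integrable _
  calc ∫ a, kernelApply μ U g a * w a ∂μ = ∫ a, ∫ c, U a c * g c * w a ∂μ ∂μ := by
        simp only [kernelApply, integral_mul_const]
    _ = ∫ c, ∫ a, U a c * g c * w a ∂μ ∂μ := integral_integral_swap hint
    _ = ∫ c, g c * -kernelApply μ U w c ∂μ := by
        refine integral_congr_ae (.of_forall fun c => ?_)
        simp only [kernelApply, ← integral_neg, ← integral_const_mul]
        refine integral_congr_ae (.of_forall fun a => ?_)
        simp only [hanti a c]
        ring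
    _ = -∫ c, g c * kernelApply μ U w c ∂μ := by simp only [mul_neg, integral_neg]

theorem ae_kernelApply_eq_zero_of_kernelApply_kernelApply {g : α → ℝ}
    (hg : IsBoundedMeasurable g) (h : ∀ᵐ a ∂μ, kernelApply μ U (kernelApply μ U g) a = 0) :
    ∀ᵐ a ∂μ, kernelApply μ U g a = 0 := by
  have hTg := hU.kernelApply (μ := μ) hg
  have hsq : ∫ a, kernelApply μ U g a ^ 2 ∂μ = 0 := by
    simp only [sq]
    rw [integral_kernelApply_mul_of_antisymm hU hanti hg hTg, neg_eq_zero]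
    exact integral_eq_zero_of_ae (h.mono fun a ha => by simp [ha])
  have hint : Integrable (fun a => kernelApply μ U g a ^ 2) μ :=
    ((hTg.mul hTg).integrable μ).congr (.of_forall fun a => (sq _).symm)
  exact ((integral_eq_zero_iff_of_nonneg (fun a => sq_nonneg _) hint).mp hsq).mono
    fun a ha => pow_eq_zero_iff two_ne_zero |>.mp ha

omit hanti in
theorem kernelApply_kernelApply {g : α → ℝ} (hg : IsBoundedMeasurable g) (a : α) :
    kernelApply μ U (kernelApply μ U g) a = kernelApply μ (kernelPow μ U 1) g a := by
  have hint : Integrable (uncurry fun c d => U a c * (U c d * g d)) (μ.prod μ) :=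
    ((hU.comp (measurable_const.prodMk measurable_fst)).mul
      (hU.mul (hg.comp measurable_snd))).integrable _
  simp only [kernelApply, kernelPow, ← integral_const_mul, ← integral_mul_const]
  rw [integral_integral_swap hint]
  simp only [mul_assoc]

theorem ae_kernelApply_eq_zero_of_kernelPow_one
    (h : ∀ᵐ p ∂μ.prod μ, kernelPow μ U 1 p.1 p.2 = 0) {g : α → ℝ}
    (hg : IsBoundedMeasurable g) : ∀ᵐ a ∂μ, kernelApply μ U g a = 0 := by
  refine ae_kernelApply_eq_zero_of_kernelApply_kernelApply hU hanti hg ?_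
  filter_upwards [Measure.ae_ae_of_ae_prod h] with a ha
  rw [kernelApply_kernelApply hU hg, kernelApply]
  exact integral_eq_zero_of_ae (ha.mono fun d hd => by simp [hd])

theorem ae_kernelPow_eq_zero_of_succ {n : ℕ}
    (h : ∀ᵐ p ∂μ.prod μ, kernelPow μ U (n + 2) p.1 p.2 = 0) :
    ∀ᵐ p ∂μ.prod μ, kernelPow μ U (n + 1) p.1 p.2 = 0 := by
  -- Column `z` of `kernelPow μ U (m + 1)` is `kernelApply μ U` applied to column `z` of
  -- `kernelPow μ U m`.
  have columns : ∀ m, (∀ᵐ p ∂μ.prod μ, kernelPow μ U m p.1 p.2 = 0) ↔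
      ∀ᵐ z ∂μ, ∀ᵐ a ∂μ, kernelPow μ U m a z = 0 := fun m => by
    have hset := (hU.kernelPow (μ := μ) m).1 (measurableSet_singleton 0)
    exact (Measure.ae_prod_iff_ae_ae hset).trans (Measure.ae_ae_comm hset)
  rw [columns] at h ⊢
  filter_upwards [h] with z hz
  exact ae_kernelApply_eq_zero_of_kernelApply_kernelApply hU hanti
    ((hU.kernelPow n).comp (measurable_id.prodMk measurable_const)) hz

theorem ae_kernelPow_one_eq_zero {n : ℕ}
    (h : ∀ᵐ p ∂μ.prod μ, kernelPow μ U (n + 1) p.1 p.2 = 0) :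
    ∀ᵐ p ∂μ.prod μ, kernelPow μ U 1 p.1 p.2 = 0 := by
  induction n with
  | zero => exact h
  | succ n ih => exact ih (ae_kernelPow_eq_zero_of_succ hU hanti h)

end AntisymmetricKernel

theorem ae_eq_zero_of_forall_setIntegral_Ioo_rat_eq_zero {μ : Measure ℝ} [IsFiniteMeasure μ]
    {f : ℝ → ℝ} (hf : Integrable f μ) (h : ∀ a b : ℚ, ∫ x in Ioo (a : ℝ) b, f x ∂μ = 0) :
    f =ᵐ[μ] 0 := by
  have hν : μ.withDensity (fun x => ENNReal.ofReal (f x)) =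
      μ.withDensity (fun x => ENNReal.ofReal (-f x)) := by
    have := isFiniteMeasure_withDensity_ofReal hf.2
    refine Real.measure_ext_Ioo_rat fun a b => ?_
    have hfab := hf.integrableOn (s := Ioo (a : ℝ) b)
    have hab := h a b
    rw [integral_eq_lintegral_pos_part_sub_lintegral_neg_part hfab, sub_eq_zero] at hab
    rw [withDensity_apply _ measurableSet_Ioo, withDensity_apply _ measurableSet_Ioo]
    exact (ENNReal.toReal_eq_toReal_iff' hfab.lintegral_lt_top.ne
      hfab.neg.lintegral_lt_top.ne).mp hab
  have hpos_neg := (withDensity_eq_iff_of_sigmaFinite hf.1.aemeasurable.ennreal_ofReal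
    hf.1.aemeasurable.neg.ennreal_ofReal).mp hν
  filter_upwards [hpos_neg] with x hx
  have hmax := congrArg ENNReal.toReal hx
  simp only [ENNReal.toReal_ofReal', Pi.neg_apply, max_def] at hmax
  simp only [Pi.zero_apply]
  split_ifs at hmax <;> linarith

theorem ae_eq_zero_of_kernelPow_one_of_antisymm {μ : Measure ℝ} [IsFiniteMeasure μ]
    {U : ℝ → ℝ → ℝ} (hU : IsBoundedMeasurable (uncurry U)) (hanti : ∀ x y, U x y = -U y x)
    (h : ∀ᵐ p ∂μ.prod μ, kernelPow μ U 1 p.1 p.2 = 0) : ∀ᵐ p ∂μ.prod μ, U p.1 p.2 = 0 := by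
  have hIoo : ∀ a b : ℚ, ∀ᵐ x ∂μ, ∫ y in Ioo (a : ℝ) b, U x y ∂μ = 0 := fun a b => by
    have hind : IsBoundedMeasurable ((Ioo (a : ℝ) b).indicator 1) :=
      ⟨measurable_one.indicator measurableSet_Ioo, 1, fun y => by
        by_cases hy : y ∈ Ioo (a : ℝ) b <;> simp [hy]⟩
    filter_upwards [ae_kernelApply_eq_zero_of_kernelPow_one hU hanti h hind] with x hx
    rw [← hx, kernelApply, ← integral_indicator measurableSet_Ioo]
    congr 1 with y
    by_cases hy : y ∈ Ioo (a : ℝ) b <;> simp [hy]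
  rw [Measure.ae_prod_iff_ae_ae (p := fun p => U p.1 p.2 = 0) (hU.1 (measurableSet_singleton 0))]
  filter_upwards [ae_all_iff.2 fun a => ae_all_iff.2 (hIoo a)] with x hx
  exact ae_eq_zero_of_forall_setIntegral_Ioo_rat_eq_zero
    ((hU.comp measurable_prodMk_left).integrable μ) hx

theorem integral_prod_cycD_edges_eq_zero_iff {μ : Measure ℝ} [IsFiniteMeasure μ]
    {U : ℝ → ℝ → ℝ} (hU : IsBoundedMeasurable (uncurry U)) (hanti : ∀ x y, U x y = -U y x)
    (n : ℕ) :
    ∫ x, ∏ e ∈ (cycD (2 * (n + 2))).edges, U (x e.1) (x e.2) ∂(Measure.pi fun _ => μ) = 0 ↔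
      ∀ᵐ p ∂μ.prod μ, U p.1 p.2 = 0 := by
  have hK := hU.kernelPow (μ := μ) (n + 1)
  have hint : Integrable (fun p : ℝ × ℝ => kernelPow μ U (n + 1) p.1 p.2 ^ 2) (μ.prod μ) :=
    ((hK.mul hK).integrable _).congr (.of_forall fun p => (sq _).symm)
  rw [integral_prod_cycD_edges hU, integral_eq_zero_iff_of_nonneg (fun p => sq_nonneg _) hint]
  constructor
  · intro h
    refine ae_eq_zero_of_kernelPow_one_of_antisymm hU hanti
      (ae_kernelPow_one_eq_zero hU hanti (n := n) ?_)
    exact h.mono fun p hp => pow_eq_zero_iff two_ne_zero |>.mp hp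
  · intro h
    have hK0 : ∀ᵐ p ∂μ.prod μ, kernelPow μ U (n + 1) p.1 p.2 = 0 :=
      (Measure.ae_prod_iff_ae_ae (p := fun p => kernelPow μ U (n + 1) p.1 p.2 = 0)
        (hK.1 (measurableSet_singleton 0))).mpr <| (Measure.ae_ae_of_ae_prod h).mono
          fun a ha => .of_forall (kernelPow_succ_eq_zero_of_ae_eq_zero ha n)
    exact hK0.mono fun p hp => by simp [hp]

theorem IsAntisymmetricKernel.exists_antisymm_eqOn_unitSquare {U : ℝ → ℝ → ℝ}
    (hU : IsAntisymmetricKernel U) :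
    ∃ V : ℝ → ℝ → ℝ, IsBoundedMeasurable (uncurry V) ∧ (∀ x y, V x y = -V y x) ∧
      ∀ x ∈ Icc (0 : ℝ) 1, ∀ y ∈ Icc (0 : ℝ) 1, U x y = V x y := by
  obtain ⟨hUm, ⟨M, hM⟩, hanti⟩ := hU
  refine ⟨fun x y => if x ∈ Icc 0 1 ∧ y ∈ Icc 0 1 then U x y else 0,
    ⟨.ite ?_ hUm measurable_const, max M 0, fun p => ?_⟩,
    fun x y => ?_, fun x hx y hy => (if_pos ⟨hx, hy⟩).symm⟩
  · exact measurableSet_Icc.prod measurableSet_Icc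
  · dsimp only [uncurry]
    split_ifs with hp
    · exact le_max_of_le_left (hM p.1 hp.1 p.2 hp.2)
    · simp
  · by_cases hxy : x ∈ Icc (0 : ℝ) 1 ∧ y ∈ Icc (0 : ℝ) 1
    · simp only [hxy, and_self, if_true, hanti x hxy.1 y hxy.2]
    · simp only [if_neg hxy, if_neg (show ¬(y ∈ Icc (0 : ℝ) 1 ∧ x ∈ Icc (0 : ℝ) 1) by tauto),
        neg_zero]

/-- `t(D_{2k},U) ≥ 0` for every antisymmetric kernel `U`, with equality iff
`U = 0` a.e. on the unit square. -/
theorem density_cycD_nonneg (k : ℕ) (hk : 2 ≤ k)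
    (U : ℝ → ℝ → ℝ) (hU : IsAntisymmetricKernel U) :
    0 ≤ homDensity (cycD (2 * k)) U ∧
    (homDensity (cycD (2 * k)) U = 0 ↔
      (∀ᵐ p : ℝ × ℝ ∂squareMeasure, U p.1 p.2 = 0)) := by
  obtain ⟨n, rfl⟩ : ∃ n, k = n + 2 := ⟨k - 2, by omega⟩
  obtain ⟨V, hV, hVanti, hUV⟩ := hU.exists_antisymm_eqOn_unitSquare
  set μ := volume.restrict (Icc (0 : ℝ) 1)
  have hdensity : homDensity (cycD (2 * (n + 2))) U =
      ∫ x, ∏ e ∈ (cycD (2 * (n + 2))).edges, V (x e.1) (x e.2) ∂(Measure.pi fun _ => μ) := by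
    rw [homDensity, setIntegral_congr_fun (MeasurableSet.univ_pi fun _ => measurableSet_Icc)
      fun x hx => Finset.prod_congr rfl fun e _ =>
        hUV _ (hx e.1 (mem_univ _)) _ (hx e.2 (mem_univ _)),
      volume_pi, Measure.restrict_pi_pi]
  have hsquare : (∀ᵐ p ∂squareMeasure, U p.1 p.2 = 0) ↔ ∀ᵐ p ∂μ.prod μ, V p.1 p.2 = 0 := by
    rw [squareMeasure, Measure.prod_restrict, ← Measure.volume_eq_prod]
    refine Filter.eventually_congr ?_
    filter_upwards [ae_restrict_mem (measurableSet_Icc.prod measurableSet_Icc)] with p hp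
    rw [hUV _ hp.1 _ hp.2]
  rw [hdensity, hsquare]
  refine ⟨?_, integral_prod_cycD_edges_eq_zero_iff hV hVanti n⟩
  rw [integral_prod_cycD_edges hV]
  exact integral_nonneg fun _ => sq_nonneg _
end

section
/- No orientation of a cycle of odd length is quasirandom-forcing. That is, for every orientation C of a cycle with an odd number of edges there exists a tournamenton W that is not equal to 1/2 almost everywhere and satisfies t(C,W) = 2^{-‖C‖}. -/
open MeasureTheory
open scoped Classical

/-!
Split `[0,1]` into thirds and let `W` be the step tournamenton of the cyclic triangle `A`, the
`3 × 3` matrix with `1/2` on the diagonal, `1` on the entries `i → i + 1` and `0` on `i + 1 → i`.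
For an orientation `C` of a cycle of length `ℓ`, `t(C, W) = 3^{-ℓ} tr(T₀ ⋯ T_{ℓ-1})`, where `Tᵢ` is
`A` or `Aᵀ` according to the orientation of the `i`-th edge. Writing `A = (3/2) P + N` with `P` the
averaging projection and `N` skew-symmetric, `PN = NP = 0` gives `T₀ ⋯ T_{ℓ-1} = (3/2)^ℓ P ± N^ℓ`,
and `tr N^ℓ = 0` for odd `ℓ`. Hence `t(C, W) = 2^{-ℓ}`, although `W` is not `1/2`.
-/

open Set
open scoped Matrix

theorem List.prod_map_add_of_mul_eq_zero {ι R : Type*} [Semiring R] {f g : ι → R}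
    (hfg : ∀ i j, f i * g j = 0) (hgf : ∀ i j, g i * f j = 0) :
    ∀ {l : List ι}, l ≠ [] →
      (l.map fun i => f i + g i).prod = (l.map f).prod + (l.map g).prod
  | [], h => absurd rfl h
  | [i], _ => by simp
  | i :: j :: l, _ => by
    rw [List.map_cons, List.prod_cons,
      List.prod_map_add_of_mul_eq_zero hfg hgf (List.cons_ne_nil j l)]
    simp only [List.map_cons, List.prod_cons, mul_add, add_mul, ← mul_assoc, hfg, hgf, add_zero,
      zero_add]

theorem List.prod_map_smul_const {ι 𝕜 A : Type*} [CommSemiring 𝕜] [Semiring A] [Algebra 𝕜 A]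
    (σ : ι → 𝕜) (N : A) (l : List ι) :
    (l.map fun i => σ i • N).prod = (l.map σ).prod • N ^ l.length := by
  induction l with
  | nil => simp
  | cons i l ih => rw [List.map_cons, List.prod_cons, ih, smul_mul_smul_comm, ← pow_succ']; simp

namespace Matrix

variable {n R : Type*} [Fintype n] [DecidableEq n]

section CommSemiring

variable [CommSemiring R]

theorem list_prod_ofFn_mulVec_apply {k : ℕ} (T : Fin k → Matrix n n R) (v : n → R) (x : n) :
    ((List.ofFn T).prod *ᵥ v) x =
      ∑ b : Fin k → n,
        (∏ i, T i (vecCons x b i.castSucc) (b i)) * v (vecCons x b (Fin.last k)) := by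
  induction k generalizing x with
  | zero => simp
  | succ k ih =>
    rw [List.ofFn_succ, List.prod_cons, ← mulVec_mulVec, mulVec, dotProduct,
      ← (Fin.consEquiv fun _ => n).sum_comp, Fintype.sum_prod_type]
    refine Finset.sum_congr rfl fun y _ => ?_
    simp only [ih, Finset.mul_sum, Fin.consEquiv_apply, vecCons, Fin.prod_univ_succ,
      Fin.castSucc_zero, Fin.cons_zero, Fin.castSucc_succ, Fin.cons_succ, ← Fin.succ_last,
      mul_assoc]

theorem trace_list_prod_ofFn {m : ℕ} (T : Fin (m + 1) → Matrix n n R) :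
    (List.ofFn T).prod.trace = ∑ a : Fin (m + 1) → n, ∏ i, T i (a i) (a (i + 1)) := by
  rw [← (Fin.consEquiv fun _ => n).sum_comp, Fintype.sum_prod_type, trace]
  refine Finset.sum_congr rfl fun x _ => ?_
  have hdiag : (List.ofFn T).prod x x = ((List.ofFn T).prod *ᵥ Pi.single x 1) x := by
    simp [mulVec_single]
  rw [diag_apply, hdiag, list_prod_ofFn_mulVec_apply, ← (Fin.snocEquiv fun _ => n).sum_comp,
    Fintype.sum_prod_type, Finset.sum_eq_single x]
  · refine Finset.sum_congr rfl fun b _ => ?_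
    let a : Fin (m + 1) → n := Fin.cons x b
    have hsrc (i : Fin (m + 1)) : vecCons x (Fin.snoc b x) i.castSucc = a i :=
      i.cases (by simp [a]) fun j => by simp [a, Fin.castSucc_succ]
    have htgt (i : Fin (m + 1)) : (Fin.snoc b x : Fin (m + 1) → n) i = a (i + 1) :=
      i.lastCases (by simp [a]) fun j => by simp [a, Fin.coeSucc_eq_succ]
    simp only [← Fin.succ_last, Fin.snocEquiv, Equiv.coe_fn_mk, cons_val_succ, Fin.snoc_last,
      Pi.single_eq_same, mul_one]
    exact Finset.prod_congr rfl fun i _ => congr_arg₂ (T i) (hsrc i) (htgt i)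
  · intro y _ hy
    simp [← Fin.succ_last, Fin.snocEquiv, hy]
  · simp

end CommSemiring

theorem trace_pow_eq_zero_of_transpose_eq_neg [CommRing R] [IsAddTorsionFree R]
    {A : Matrix n n R} (hA : Aᵀ = -A) {k : ℕ} (hk : Odd k) : (A ^ k).trace = 0 := by
  refine self_eq_neg.1 ?_
  calc (A ^ k).trace = (A ^ k)ᵀ.trace := (trace_transpose _).symm
    _ = -(A ^ k).trace := by rw [transpose_pow, hA, hk.neg_pow, trace_neg]

theorem trace_list_prod_map_smul_add_smul [CommRing R] [IsAddTorsionFree R] {ι : Type*}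
    {P N : Matrix n n R} (hP : IsIdempotentElem P) (hPN : P * N = 0) (hNP : N * P = 0)
    (hN : Nᵀ = -N) (c : R) (σ : ι → R) {l : List ι} (hl : Odd l.length) :
    (l.map fun i => c • P + σ i • N).prod.trace = c ^ l.length * P.trace := by
  have hl0 : l ≠ [] := by rintro rfl; simp at hl
  obtain ⟨k, hk⟩ := hl
  rw [List.prod_map_add_of_mul_eq_zero (f := fun _ => c • P) (fun _ _ => by simp [hPN])
    (fun _ _ => by simp [hNP]) hl0, List.prod_map_smul_const σ N, List.map_const',
    List.prod_replicate, trace_add, trace_smul, trace_pow_eq_zero_of_transpose_eq_neg hN ⟨k, hk⟩,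
    smul_zero, add_zero, smul_pow, hk, hP.pow_succ_eq, trace_smul, smul_eq_mul]

end Matrix

theorem Fin.add_one_add_one_ne_self {ℓ : ℕ} [NeZero ℓ] (hℓ : 3 ≤ ℓ) (i : Fin ℓ) :
    i + 1 + 1 ≠ i := by
  rw [add_assoc, Ne, add_eq_left, Fin.ext_iff, Fin.val_add, Fin.val_one', Fin.val_zero,
    Nat.mod_eq_of_lt (by omega : 1 < ℓ), Nat.mod_eq_of_lt (by omega : 2 < ℓ)]
  omega

namespace OrientedGraph

variable {ℓ : ℕ} [NeZero ℓ]

def cycleEdge (C : OrientedGraph (Fin ℓ)) (i : Fin ℓ) : Fin ℓ × Fin ℓ :=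
  if (i, i + 1) ∈ C.edges then (i, i + 1) else (i + 1, i)

def cycleTransfer {κ R : Type*} (C : OrientedGraph (Fin ℓ)) (M : Matrix κ κ R) (i : Fin ℓ) :
    Matrix κ κ R :=
  if (i, i + 1) ∈ C.edges then M else Mᵀ

end OrientedGraph

namespace IsCycleOrientation

variable {ℓ : ℕ} [NeZero ℓ] {C : OrientedGraph (Fin ℓ)} (hC : IsCycleOrientation C)
include hC

theorem eq_add_one_or_eq_add_one {e : Fin ℓ × Fin ℓ} (he : e ∈ C.edges) :
    e.2 = e.1 + 1 ∨ e.1 = e.2 + 1 := by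
  simpa [Fin.ext_iff, Fin.val_add] using hC.1 e he

theorem mem_or_mem (i : Fin ℓ) : (i, i + 1) ∈ C.edges ∨ (i + 1, i) ∈ C.edges := by
  obtain ⟨e, he, ⟨h1, h2⟩ | ⟨h1, h2⟩⟩ := hC.2 i
  · left
    convert he using 1
    ext <;> simp [h1, h2, Fin.val_add]
  · right
    convert he using 1
    ext <;> simp [h1, h2, Fin.val_add]

theorem bijOn_cycleEdge (hℓ : 3 ≤ ℓ) : Set.BijOn C.cycleEdge Set.univ C.edges := by
  refine ⟨fun i _ => ?_, fun i _ j _ hij => ?_, fun e he => ?_⟩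
  · unfold OrientedGraph.cycleEdge
    split_ifs with h
    · exact h
    · exact (hC.mem_or_mem i).resolve_left h
  · have := Fin.add_one_add_one_ne_self hℓ i
    have := Fin.add_one_add_one_ne_self hℓ j
    unfold OrientedGraph.cycleEdge at hij
    split_ifs at hij <;> simp only [Prod.mk.injEq] at hij <;> grind
  · replace he : e ∈ C.edges := he
    rcases hC.eq_add_one_or_eq_add_one he with h | h
    · refine ⟨e.1, trivial, ?_⟩
      have he' : (e.1, e.1 + 1) = e := by rw [← h]
      simp [OrientedGraph.cycleEdge, he', he]
    · refine ⟨e.2, trivial, ?_⟩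
      have hrev : (e.2, e.2 + 1) ∉ C.edges := by rw [← h]; exact C.antisymm _ _ he
      rw [OrientedGraph.cycleEdge, if_neg hrev, ← h]

theorem card_edges (hℓ : 3 ≤ ℓ) : C.edges.card = ℓ := by
  have h := hC.bijOn_cycleEdge hℓ
  rw [← Finset.coe_univ] at h
  rw [← Finset.card_nbij _ h.mapsTo h.injOn h.surjOn, Finset.card_univ, Fintype.card_fin]

theorem prod_edges_eq_prod_cycleTransfer {κ R : Type*} [CommMonoid R] (hℓ : 3 ≤ ℓ)
    (M : Matrix κ κ R) (a : Fin ℓ → κ) :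
    ∏ e ∈ C.edges, M (a e.1) (a e.2) = ∏ i, C.cycleTransfer M i (a i) (a (i + 1)) := by
  have h := hC.bijOn_cycleEdge hℓ
  rw [← Finset.coe_univ] at h
  refine (Finset.prod_nbij _ (fun i _ => h.mapsTo (Finset.mem_coe.2 (Finset.mem_univ i)))
    h.injOn h.surjOn fun i _ => ?_).symm
  unfold OrientedGraph.cycleEdge OrientedGraph.cycleTransfer
  split_ifs <;> rfl

end IsCycleOrientation

section StepKernel

variable {κ : Type*} [MeasurableSpace κ] [MeasurableSingletonClass κ]

theorem setIntegral_univ_pi_comp_eq_sum [Fintype κ] {ι : Type*} [Fintype ι] [DecidableEq ι]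
    {s : ℝ → κ} (hs : Measurable s) {S : Set ℝ} (hS : volume S ≠ ⊤) (Φ : (ι → κ) → ℝ) :
    ∫ x in univ.pi (fun _ : ι => S), Φ (fun i => s (x i)) =
      ∑ a : ι → κ, (∏ i, volume.real (s ⁻¹' {a i} ∩ S)) * Φ a := by
  have : IsFiniteMeasure (volume.restrict S) := isFiniteMeasure_restrict.2 hS
  have hsx : Measurable fun (x : ι → ℝ) i => s (x i) :=
    measurable_pi_lambda _ fun i => hs.comp (measurable_pi_apply i)
  rw [volume_pi, Measure.restrict_pi_pi,
    ← integral_map (φ := fun (x : ι → ℝ) i => s (x i)) hsx.aemeasurable (by fun_prop),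
    Measure.pi_map_pi fun _ => hs.aemeasurable, integral_fintype (Integrable.of_finite)]
  refine Finset.sum_congr rfl fun a _ => ?_
  simp only [measureReal_def, Measure.pi_singleton, ENNReal.toReal_prod, smul_eq_mul,
    Measure.map_apply hs (measurableSet_singleton _),
    Measure.restrict_apply (hs (measurableSet_singleton _))]

def stepKernel (s : ℝ → κ) (M : Matrix κ κ ℝ) : ℝ → ℝ → ℝ := fun x y => M (s x) (s y)

variable {s : ℝ → κ} {M : Matrix κ κ ℝ}

theorem homDensity_stepKernel [Fintype κ] {V : Type} [Fintype V] [DecidableEq V]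
    (H : OrientedGraph V) (hs : Measurable s) :
    homDensity H (stepKernel s M) =
      ∑ a : V → κ, (∏ v, volume.real (s ⁻¹' {a v} ∩ Icc 0 1)) *
        ∏ e ∈ H.edges, M (a e.1) (a e.2) :=
  setIntegral_univ_pi_comp_eq_sum hs (by simp) fun a => ∏ e ∈ H.edges, M (a e.1) (a e.2)

theorem isTournamenton_stepKernel [Countable κ] (hs : Measurable s)
    (hM : ∀ j k, M j k + M k j = 1) (hM₀ : ∀ j k, 0 ≤ M j k) : IsTournamenton (stepKernel s M) :=
  ⟨(measurable_of_countable fun p : κ × κ => M p.1 p.2).comp (hs.prodMap hs),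
    fun x _ y _ => ⟨hM₀ _ _, show M (s x) (s y) ≤ 1 by linarith [hM (s x) (s y), hM₀ (s y) (s x)]⟩,
    fun x _ y _ => hM _ _⟩

theorem stepKernel_apply_eq_of_ae_eq (hs : Measurable s)
    (hpos : ∀ k, volume (s ⁻¹' {k} ∩ Icc 0 1) ≠ 0) {c : ℝ}
    (h : ∀ᵐ p ∂squareMeasure, stepKernel s M p.1 p.2 = c) (j k : κ) : M j k = c := by
  set B := (s ⁻¹' {j} ∩ Icc 0 1) ×ˢ (s ⁻¹' {k} ∩ Icc 0 1)
  have hB : MeasurableSet B :=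
    ((hs (measurableSet_singleton j)).inter measurableSet_Icc).prod
      ((hs (measurableSet_singleton k)).inter measurableSet_Icc)
  have hB₀ : volume B ≠ 0 := by
    rw [Measure.volume_eq_prod, Measure.prod_prod]
    exact mul_ne_zero (hpos j) (hpos k)
  have : (ae (volume.restrict B)).NeBot := ae_neBot.2 (by rwa [Ne, Measure.restrict_eq_zero])
  obtain ⟨p, hpc, ⟨hj, -⟩, hk, -⟩ :=
    ((ae_restrict_of_ae_restrict_of_subset (prod_mono inter_subset_right inter_subset_right) h).and
      (ae_restrict_mem hB)).exists
  rwa [← show s p.1 = j from hj, ← show s p.2 = k from hk]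

end StepKernel

noncomputable def thirds (t : ℝ) : Fin 3 := if t < 1 / 3 then 0 else if t < 2 / 3 then 1 else 2

theorem measurable_thirds : Measurable thirds :=
  Measurable.ite measurableSet_Iio measurable_const
    (Measurable.ite measurableSet_Iio measurable_const measurable_const)

theorem thirds_preimage_inter_Icc :
    thirds ⁻¹' {0} ∩ Icc 0 1 = Ico 0 (1 / 3) ∧ thirds ⁻¹' {1} ∩ Icc 0 1 = Ico (1 / 3) (2 / 3) ∧
      thirds ⁻¹' {2} ∩ Icc 0 1 = Icc (2 / 3) 1 := by
  refine ⟨?_, ?_, ?_⟩ <;> ext t <;>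
    simp only [thirds, mem_inter_iff, mem_preimage, mem_singleton_iff, mem_Icc, mem_Ico] <;>
    split_ifs <;> constructor <;> rintro ⟨h1, h2⟩ <;>
    first
    | exact absurd h1 (by decide)
    | exact ⟨rfl, by linarith, by linarith⟩
    | constructor <;> linarith

theorem volume_real_thirds_preimage_inter (k : Fin 3) :
    volume.real (thirds ⁻¹' {k} ∩ Icc 0 1) = 1 / 3 := by
  obtain ⟨h0, h1, h2⟩ := thirds_preimage_inter_Icc
  match k with
  | 0 => rw [h0, Real.volume_real_Ico_of_le (by norm_num)]; norm_num
  | 1 => rw [h1, Real.volume_real_Ico_of_le (by norm_num)]; norm_num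
  | 2 => rw [h2, Real.volume_real_Icc_of_le (by norm_num)]; norm_num

noncomputable def cyclicTriangle : Matrix (Fin 3) (Fin 3) ℝ :=
  !![1 / 2, 1, 0; 0, 1 / 2, 1; 1, 0, 1 / 2]

theorem isTournamenton_stepKernel_cyclicTriangle :
    IsTournamenton (stepKernel thirds cyclicTriangle) :=
  isTournamenton_stepKernel measurable_thirds
    (fun j k => by fin_cases j <;> fin_cases k <;> norm_num [cyclicTriangle])
    (fun j k => by fin_cases j <;> fin_cases k <;> norm_num [cyclicTriangle])

theorem trace_list_prod_ofFn_cycleTransfer_cyclicTriangle {ℓ : ℕ} [NeZero ℓ]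
    (C : OrientedGraph (Fin ℓ)) (hℓ : Odd ℓ) :
    (List.ofFn (C.cycleTransfer cyclicTriangle)).prod.trace = (3 / 2) ^ ℓ := by
  let P : Matrix (Fin 3) (Fin 3) ℝ := Matrix.of fun _ _ => 1 / 3
  let N : Matrix (Fin 3) (Fin 3) ℝ := !![0, 1 / 2, -1 / 2; -1 / 2, 0, 1 / 2; 1 / 2, -1 / 2, 0]
  have hT : C.cycleTransfer cyclicTriangle =
      fun i => (3 / 2 : ℝ) • P + (if (i, i + 1) ∈ C.edges then 1 else -1 : ℝ) • N := by
    funext i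
    unfold OrientedGraph.cycleTransfer
    split_ifs <;> ext j k <;> fin_cases j <;> fin_cases k <;> norm_num [P, N, cyclicTriangle]
  have hP : IsIdempotentElem P := by
    ext j k; fin_cases j <;> fin_cases k <;> norm_num [P, Matrix.mul_apply, Fin.sum_univ_three]
  have hPN : P * N = 0 := by
    ext j k; fin_cases j <;> fin_cases k <;> simp [P, N, Matrix.mul_apply, Fin.sum_univ_three] <;>
      norm_num
  have hNP : N * P = 0 := by
    ext j k; fin_cases j <;> fin_cases k <;> simp [P, N, Matrix.mul_apply, Fin.sum_univ_three] <;>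
      norm_num
  have hN : Nᵀ = -N := by
    ext j k; fin_cases j <;> fin_cases k <;> norm_num [N]
  rw [hT, List.ofFn_eq_map, Matrix.trace_list_prod_map_smul_add_smul hP hPN hNP hN _ _
    (by simpa using hℓ)]
  norm_num [P, Matrix.trace_fin_three]

theorem IsCycleOrientation.homDensity_stepKernel_eq_trace {m : ℕ}
    {C : OrientedGraph (Fin (m + 1))} (hC : IsCycleOrientation C) (hm : 3 ≤ m + 1)
    {κ : Type*} [Fintype κ] [DecidableEq κ] [MeasurableSpace κ] [MeasurableSingletonClass κ]
    {s : ℝ → κ} (hs : Measurable s) {c : ℝ}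
    (hfib : ∀ k, volume.real (s ⁻¹' {k} ∩ Icc 0 1) = c) (M : Matrix κ κ ℝ) :
    homDensity C (stepKernel s M) = c ^ (m + 1) * (List.ofFn (C.cycleTransfer M)).prod.trace := by
  rw [homDensity_stepKernel C hs, Matrix.trace_list_prod_ofFn, Finset.mul_sum]
  refine Finset.sum_congr rfl fun a _ => ?_
  simp [hfib, hC.prod_edges_eq_prod_cycleTransfer hm]

/-- no orientation of an odd cycle is quasirandom-forcing. -/
theorem odd_cycle_not_quasirandomForcing (ℓ : ℕ) (hℓ : 3 ≤ ℓ) (hOdd : Odd ℓ)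
    (C : OrientedGraph (Fin ℓ)) (hC : IsCycleOrientation C) :
    ∃ W : ℝ → ℝ → ℝ, IsTournamenton W ∧
      ¬ (∀ᵐ p : ℝ × ℝ ∂squareMeasure, W p.1 p.2 = 1 / 2) ∧
      homDensity C W = (1 / 2 : ℝ) ^ C.edges.card := by
  obtain ⟨m, rfl⟩ : ∃ m, ℓ = m + 1 := ⟨ℓ - 1, by omega⟩
  refine ⟨stepKernel thirds cyclicTriangle, isTournamenton_stepKernel_cyclicTriangle,
    fun h => ?_, ?_⟩
  · have hpos (k : Fin 3) : volume (thirds ⁻¹' {k} ∩ Icc 0 1) ≠ 0 := fun h0 => by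
      simpa [measureReal_def, h0] using volume_real_thirds_preimage_inter k
    have := stepKernel_apply_eq_of_ae_eq measurable_thirds hpos h 0 1
    norm_num [cyclicTriangle] at this
  · rw [hC.homDensity_stepKernel_eq_trace hℓ measurable_thirds volume_real_thirds_preimage_inter,
      trace_list_prod_ofFn_cycleTransfer_cyclicTriangle C hOdd, hC.card_edges hℓ, ← mul_pow]
    norm_num
end

section
/- Let C be an orientation of a cycle. If there exist tournamentons W_1 and W_2 such that t(C,W_1) < 2^{-‖C‖} and t(C,W_2) > 2^{-‖C‖}, then C is not quasirandom-forcing, i.e. there exists a tournamenton W not equal to 1/2 almost everywhere with t(C,W) = 2^{-‖C‖}. -/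
open MeasureTheory
open scoped Classical

/-!
Along the segment `W_t = (1 - t) W₁ + t W₂` the density `t(C, W_t)` is a polynomial in `t`, so by
the intermediate value theorem it equals `2^{-‖C‖}` at some `t`. If `W_t` is not `1/2` almost
everywhere we are done. Otherwise `W₂ - 1/2` is a positive multiple of `1/2 - W₁ = W₁ᵀ - 1/2`,
where `W₁ᵀ(x, y) = W₁(y, x)`; since `t(C, W₁ᵀ) = t(C, W₁)`, the segment from `W₁ᵀ` to `W₂` crosses
the value `2^{-‖C‖}` too, and it never meets `1/2`.

The identity `t(C, 1/2 - U) = t(C, 1/2 + U)` for antisymmetric `U` holds because in the expansion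
of `t(C, 1/2 + U)` every term `∫ ∏_{e ∈ F} U` with `|F|` odd vanishes: a reflection of the whole
cycle (if `F` is all of it) or of an odd maximal path of `F` relabels the vertices so that an odd
number of edges of `F` are reversed, which changes the sign of the term.
-/

namespace QuasirandomCycle

open Set

noncomputable def unitMeasure : Measure ℝ := volume.restrict (Icc 0 1)

instance : IsProbabilityMeasure unitMeasure :=
  ⟨by simp [unitMeasure, Real.volume_Icc]⟩

noncomputable def cubeMeasure (V : Type) [Fintype V] : Measure (V → ℝ) :=
  Measure.pi fun _ => unitMeasure

instance (V : Type) [Fintype V] : IsProbabilityMeasure (cubeMeasure V) := by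
  unfold cubeMeasure; infer_instance

lemma abs_prod_edges_le {V : Type} {U : ℝ → ℝ → ℝ} {M : ℝ}
    (hU : ∀ x ∈ Icc (0 : ℝ) 1, ∀ y ∈ Icc (0 : ℝ) 1, |U x y| ≤ M)
    (F : Finset (V × V)) {x : V → ℝ} (hx : ∀ i, x i ∈ Icc (0 : ℝ) 1) :
    |∏ e ∈ F, U (x e.1) (x e.2)| ≤ M ^ F.card := by
  rw [Finset.abs_prod, ← Finset.prod_const]
  exact Finset.prod_le_prod (fun _ _ => abs_nonneg _) fun e _ => hU _ (hx _) _ (hx _)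

section Density

variable {V : Type} [Fintype V]

lemma homDensity_eq_integral (H : OrientedGraph V) (U : ℝ → ℝ → ℝ) :
    homDensity H U = ∫ x, ∏ e ∈ H.edges, U (x e.1) (x e.2) ∂cubeMeasure V := by
  rw [homDensity, volume_pi, Measure.restrict_pi_pi, cubeMeasure, unitMeasure]

lemma ae_mem_cube : ∀ᵐ x ∂cubeMeasure V, ∀ i, x i ∈ Icc (0 : ℝ) 1 := by
  have h : ∀ᵐ x ∂cubeMeasure V, x ∈ univ.pi fun _ : V => Icc (0 : ℝ) 1 := by
    rw [cubeMeasure, unitMeasure, ← Measure.restrict_pi_pi]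
    exact ae_restrict_mem (.univ_pi fun _ => measurableSet_Icc)
  filter_upwards [h] with x hx i using hx i (mem_univ i)

lemma squareMeasure_eq_prod : squareMeasure = unitMeasure.prod unitMeasure := by
  rw [squareMeasure, unitMeasure, Measure.prod_restrict, ← Measure.volume_eq_prod]

lemma ae_squareMeasure_mem : ∀ᵐ p ∂squareMeasure, p.1 ∈ Icc (0 : ℝ) 1 ∧ p.2 ∈ Icc (0 : ℝ) 1 :=
  ae_restrict_mem (measurableSet_Icc.prod measurableSet_Icc)

lemma ae_cubeMeasure_of_ae_squareMeasure {u v : V} (huv : u ≠ v) {P : ℝ × ℝ → Prop}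
    (h : ∀ᵐ p ∂squareMeasure, P p) : ∀ᵐ x ∂cubeMeasure V, P (x u, x v) := by
  have hmap : (cubeMeasure V).map (fun x => (x u, x v)) = squareMeasure := by
    rw [squareMeasure_eq_prod, cubeMeasure, ← Measure.infinitePi_eq_pi,
      Measure.infinitePi_map_eval_prod huv]
  exact ae_of_ae_map (by fun_prop) (hmap ▸ h)

lemma homDensity_congr_ae (H : OrientedGraph V) {K₁ K₂ : ℝ → ℝ → ℝ}
    (h : ∀ᵐ p ∂squareMeasure, K₁ p.1 p.2 = K₂ p.1 p.2) :
    homDensity H K₁ = homDensity H K₂ := by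
  rw [homDensity_eq_integral, homDensity_eq_integral]
  refine integral_congr_ae ?_
  have hedges : ∀ᵐ x ∂cubeMeasure V, ∀ e ∈ H.edges, K₁ (x e.1) (x e.2) = K₂ (x e.1) (x e.2) :=
    (ae_ball_iff H.edges.countable_toSet).2 fun e he =>
      ae_cubeMeasure_of_ae_squareMeasure (H.irrefl e he) h
  filter_upwards [hedges] with x hx using Finset.prod_congr rfl hx

lemma homDensity_const (H : OrientedGraph V) (c : ℝ) :
    homDensity H (fun _ _ => c) = c ^ H.edges.card := by
  simp [homDensity_eq_integral]

lemma integral_comp_perm (σ : Equiv.Perm V) (f : (V → ℝ) → ℝ) :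
    ∫ x, f (fun i => x (σ i)) ∂cubeMeasure V = ∫ x, f x ∂cubeMeasure V := by
  have h := (measurePreserving_piCongrLeft (fun _ => unitMeasure) σ.symm).integral_comp' f
  have hσ : ⇑(MeasurableEquiv.piCongrLeft (fun _ => ℝ) σ.symm) = fun x i => x (σ i) := by
    ext x i
    simp [MeasurableEquiv.coe_piCongrLeft, Equiv.piCongrLeft_apply]
  rwa [hσ] at h

lemma integrable_prod_edges_mul_prod_edges {A B : ℝ → ℝ → ℝ}
    (hA : Measurable (Function.uncurry A)) (hB : Measurable (Function.uncurry B)) {MA MB : ℝ}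
    (hbA : ∀ x ∈ Icc (0 : ℝ) 1, ∀ y ∈ Icc (0 : ℝ) 1, |A x y| ≤ MA)
    (hbB : ∀ x ∈ Icc (0 : ℝ) 1, ∀ y ∈ Icc (0 : ℝ) 1, |B x y| ≤ MB) (F G : Finset (V × V)) :
    Integrable (fun x : V → ℝ => (∏ e ∈ F, B (x e.1) (x e.2)) * ∏ e ∈ G, A (x e.1) (x e.2))
      (cubeMeasure V) := by
  have hmeas : ∀ (K : ℝ → ℝ → ℝ), Measurable (Function.uncurry K) → ∀ E : Finset (V × V),
      Measurable fun x : V → ℝ => ∏ e ∈ E, K (x e.1) (x e.2) := fun K hK E =>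
    Finset.measurable_prod _ fun e _ =>
      hK.comp (f := fun x : V → ℝ => (x e.1, x e.2)) (by fun_prop)
  refine Integrable.of_bound ((hmeas B hB F).mul (hmeas A hA G)).aestronglyMeasurable
    (MB ^ F.card * MA ^ G.card) ?_
  filter_upwards [ae_mem_cube] with x hx
  rw [Real.norm_eq_abs, abs_mul]
  exact mul_le_mul (abs_prod_edges_le hbB F hx) (abs_prod_edges_le hbA G hx) (abs_nonneg _)
    ((abs_nonneg _).trans (abs_prod_edges_le hbB F hx))

lemma homDensity_add_mul_eq_sum (H : OrientedGraph V) {A B : ℝ → ℝ → ℝ}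
    (hA : Measurable (Function.uncurry A)) (hB : Measurable (Function.uncurry B)) {MA MB : ℝ}
    (hbA : ∀ x ∈ Icc (0 : ℝ) 1, ∀ y ∈ Icc (0 : ℝ) 1, |A x y| ≤ MA)
    (hbB : ∀ x ∈ Icc (0 : ℝ) 1, ∀ y ∈ Icc (0 : ℝ) 1, |B x y| ≤ MB) (θ : ℝ) :
    homDensity H (fun x y => A x y + θ * B x y) = ∑ F ∈ H.edges.powerset, θ ^ F.card *
      ∫ x, (∏ e ∈ F, B (x e.1) (x e.2)) * ∏ e ∈ H.edges \ F, A (x e.1) (x e.2) ∂cubeMeasure V := by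
  have hexpand : ∀ x : V → ℝ, ∏ e ∈ H.edges, (A (x e.1) (x e.2) + θ * B (x e.1) (x e.2)) =
      ∑ F ∈ H.edges.powerset, θ ^ F.card *
        ((∏ e ∈ F, B (x e.1) (x e.2)) * ∏ e ∈ H.edges \ F, A (x e.1) (x e.2)) := fun x => by
    simp_rw [add_comm (A _ _), Finset.prod_add, Finset.prod_mul_distrib, Finset.prod_const,
      mul_assoc]
  simp_rw [homDensity_eq_integral, hexpand]
  rw [integral_finsetSum _ fun F _ =>
    (integrable_prod_edges_mul_prod_edges hA hB hbA hbB F _).const_mul _]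
  simp_rw [integral_const_mul]

lemma continuous_homDensity_add_mul (H : OrientedGraph V) {A B : ℝ → ℝ → ℝ}
    (hA : Measurable (Function.uncurry A)) (hB : Measurable (Function.uncurry B)) {MA MB : ℝ}
    (hbA : ∀ x ∈ Icc (0 : ℝ) 1, ∀ y ∈ Icc (0 : ℝ) 1, |A x y| ≤ MA)
    (hbB : ∀ x ∈ Icc (0 : ℝ) 1, ∀ y ∈ Icc (0 : ℝ) 1, |B x y| ≤ MB) :
    Continuous fun θ => homDensity H (fun x y => A x y + θ * B x y) := by
  simp_rw [homDensity_add_mul_eq_sum H hA hB hbA hbB]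
  fun_prop

end Density

lemma exists_maximal_run_of_odd_card (T : Finset ℕ) (hT : Odd T.card) :
    ∃ a b : ℕ, (∀ n, a ≤ n → n < b → n ∈ T) ∧ (∀ n ∈ T, n + 1 ≠ a) ∧ b ∉ T ∧ Odd (b - a) := by
  induction T using Finset.strongInduction with
  | H T ih =>
  have hne : T.Nonempty := Finset.card_pos.mp hT.pos
  set a := T.min' hne
  have hex : ∃ n, a ≤ n ∧ n ∉ T :=
    ⟨T.max' hne + 1, (T.min'_le_max' hne).trans (Nat.le_succ _),
      fun h => by have := T.le_max' _ h; omega⟩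
  set b := Nat.find hex
  have hb : a ≤ b ∧ b ∉ T := Nat.find_spec hex
  have hrun : ∀ n, a ≤ n → n < b → n ∈ T := fun n h₁ h₂ => by
    by_contra h
    exact Nat.find_min hex h₂ ⟨h₁, h⟩
  have hleft : ∀ n ∈ T, n + 1 ≠ a := fun n hn => by have := T.min'_le n hn; omega
  by_cases hodd : Odd (b - a)
  · exact ⟨a, b, hrun, hleft, hb.2, hodd⟩
  -- an even first run: discard it and find an odd run among the remaining elements
  have hsub : Finset.Ico a b ⊆ T := fun n hn =>
    hrun n (Finset.mem_Ico.1 hn).1 (Finset.mem_Ico.1 hn).2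
  have hab : a < b := lt_of_le_of_ne hb.1 fun h => hb.2 (h ▸ T.min'_mem hne)
  have hcard : Odd (T \ Finset.Ico a b).card := by
    rw [Finset.card_sdiff_of_subset hsub, Nat.card_Ico]
    exact Nat.Odd.sub_even (by simpa using Finset.card_le_card hsub) hT
      (Nat.not_odd_iff_even.1 hodd)
  have hgt : ∀ n ∈ T \ Finset.Ico a b, b < n := fun n hn => by
    rw [Finset.mem_sdiff, Finset.mem_Ico] at hn
    have := T.min'_le n hn.1
    have : n ≠ b := fun h => hb.2 (h ▸ hn.1)
    omega
  obtain ⟨a', b', hrun', hleft', hright', hodd'⟩ :=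
    ih _ (Finset.sdiff_ssubset hsub ⟨a, Finset.mem_Ico.2 ⟨le_rfl, hab⟩⟩) hcard
  have hab' := hodd'.pos
  have hba' : b < a' := hgt a' (hrun' a' le_rfl (by omega))
  refine ⟨a', b', fun n h₁ h₂ => (Finset.mem_sdiff.1 (hrun' n h₁ h₂)).1, fun n hn => ?_,
    fun h => hright' (Finset.mem_sdiff.2 ⟨h, by simp; omega⟩), hodd'⟩
  by_cases hn' : n ∈ Finset.Ico a b
  · rw [Finset.mem_Ico] at hn'
    omega
  · exact hleft' n (Finset.mem_sdiff.2 ⟨hn, hn'⟩)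

section Cycle

variable {ℓ : ℕ} [NeZero ℓ]

noncomputable def cycleIntegral (U : ℝ → ℝ → ℝ) (S : Finset (Fin ℓ)) : ℝ :=
  ∫ x, ∏ i ∈ S, U (x i) (x (i + 1)) ∂cubeMeasure (Fin ℓ)

lemma cycleIntegral_image_add_right (U : ℝ → ℝ → ℝ) (S : Finset (Fin ℓ)) (r : Fin ℓ) :
    cycleIntegral U (S.image (· + r)) = cycleIntegral U S := by
  simp_rw [cycleIntegral, Finset.prod_image fun i _ j _ h => add_right_cancel h,
    add_right_comm _ r 1]
  exact integral_comp_perm (Equiv.addRight r) fun x => ∏ i ∈ S, U (x i) (x (i + 1))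

/-- `σ` fixes the edges `(i, i + 1)`, `i ∈ S \ R`, and maps each edge `(i, i + 1)`, `i ∈ R`, to the
reversed edge `(j + 1, j)` with `j = σ (i + 1) ∈ R`; substituting `x ∘ σ` for `x` therefore flips
the sign of the integrand `|R|` times. -/
lemma cycleIntegral_eq_zero_of_involutive {U : ℝ → ℝ → ℝ}
    (hU : ∀ x ∈ Icc (0 : ℝ) 1, ∀ y ∈ Icc (0 : ℝ) 1, U x y = -U y x)
    {σ : Fin ℓ → Fin ℓ} (hσ : Function.Involutive σ) {S R : Finset (Fin ℓ)} (hRS : R ⊆ S)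
    (hfix : ∀ i ∈ S \ R, σ i = i ∧ σ (i + 1) = i + 1)
    (hrev : ∀ i ∈ R, σ i = σ (i + 1) + 1 ∧ σ (i + 1) ∈ R) (hR : Odd R.card) :
    cycleIntegral U S = 0 := by
  have hflip : ∀ᵐ x ∂cubeMeasure (Fin ℓ),
      ∏ i ∈ S, U (x (σ i)) (x (σ (i + 1))) = -∏ i ∈ S, U (x i) (x (i + 1)) := by
    filter_upwards [ae_mem_cube] with x hx
    have hout : ∏ i ∈ S \ R, U (x (σ i)) (x (σ (i + 1))) = ∏ i ∈ S \ R, U (x i) (x (i + 1)) :=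
      Finset.prod_congr rfl fun i hi => by rw [(hfix i hi).1, (hfix i hi).2]
    have hin : ∏ i ∈ R, U (x (σ i)) (x (σ (i + 1))) = -∏ i ∈ R, U (x i) (x (i + 1)) :=
      calc ∏ i ∈ R, U (x (σ i)) (x (σ (i + 1)))
          = ∏ i ∈ R, -U (x (σ (i + 1))) (x (σ (i + 1) + 1)) :=
            Finset.prod_congr rfl fun i hi => by rw [(hrev i hi).1, hU _ (hx _) _ (hx _)]
        _ = -∏ i ∈ R, U (x (σ (i + 1))) (x (σ (i + 1) + 1)) := by
            rw [Finset.prod_neg, hR.neg_one_pow, neg_one_mul]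
        _ = -∏ i ∈ R, U (x i) (x (i + 1)) := by
            have hρ : ∀ i ∈ R, σ (σ (i + 1) + 1) = i := fun i hi => by rw [← (hrev i hi).1, hσ]
            congr 1
            exact Finset.prod_nbij' (fun i => σ (i + 1)) (fun i => σ (i + 1))
              (fun i hi => (hrev i hi).2) (fun i hi => (hrev i hi).2) hρ hρ fun _ _ => rfl
    rw [← Finset.prod_sdiff hRS, ← Finset.prod_sdiff hRS, hout, hin, mul_neg]
  have h : cycleIntegral U S = -cycleIntegral U S :=
    calc cycleIntegral U S = ∫ x, ∏ i ∈ S, U (x (σ i)) (x (σ (i + 1))) ∂cubeMeasure (Fin ℓ) :=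
          (integral_comp_perm (hσ.toPerm σ) fun x => ∏ i ∈ S, U (x i) (x (i + 1))).symm
      _ = -cycleIntegral U S := by rw [integral_congr_ae hflip, integral_neg, cycleIntegral]
  linarith

lemma cycleIntegral_univ_eq_zero {U : ℝ → ℝ → ℝ}
    (hU : ∀ x ∈ Icc (0 : ℝ) 1, ∀ y ∈ Icc (0 : ℝ) 1, U x y = -U y x) (hℓ : Odd ℓ) :
    cycleIntegral U (Finset.univ : Finset (Fin ℓ)) = 0 :=
  cycleIntegral_eq_zero_of_involutive hU neg_involutive (Finset.subset_univ _) (by simp)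
    (fun i _ => ⟨by abel, Finset.mem_univ _⟩) (by simpa using hℓ)

/-- The reflection `v ↦ a + b - v` of the vertices of a maximal run `a, …, b - 1` of `S` reverses
exactly the edges of that run. -/
lemma cycleIntegral_eq_zero_of_maximal_run {U : ℝ → ℝ → ℝ}
    (hU : ∀ x ∈ Icc (0 : ℝ) 1, ∀ y ∈ Icc (0 : ℝ) 1, U x y = -U y x)
    {S : Finset (Fin ℓ)} {a b : ℕ} (hb : b < ℓ) (hwrap : ∀ i ∈ S, i.val + 1 < ℓ)
    (hrun : ∀ i : Fin ℓ, a ≤ i.val → i.val < b → i ∈ S) (hleft : ∀ i ∈ S, i.val + 1 ≠ a)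
    (hright : ∀ i ∈ S, i.val ≠ b) (hodd : Odd (b - a)) :
    cycleIntegral U S = 0 := by
  let σ : Fin ℓ → Fin ℓ := fun v =>
    if h : a ≤ v.val ∧ v.val ≤ b then ⟨a + b - v.val, by omega⟩ else v
  have hσ : ∀ v, (σ v).val = if a ≤ v.val ∧ v.val ≤ b then a + b - v.val else v.val := fun v => by
    simp only [σ]; split_ifs <;> rfl
  have hsucc : ∀ i : Fin ℓ, i.val + 1 < ℓ → (i + 1).val = i.val + 1 := fun _ h =>
    Fin.val_add_one_of_lt' h
  let R := S.filter fun i => a ≤ i.val ∧ i.val < b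
  have hR : R.card = b - a := by
    rw [← Nat.card_Ico, ← Finset.card_map Fin.valEmbedding]
    congr 1
    ext n
    simp only [Finset.mem_map, Finset.mem_filter, Fin.valEmbedding_apply, Finset.mem_Ico, R]
    constructor
    · rintro ⟨i, ⟨-, hi⟩, rfl⟩
      exact hi
    · intro hn
      exact ⟨⟨n, by omega⟩, ⟨hrun _ hn.1 hn.2, hn⟩, rfl⟩
  refine cycleIntegral_eq_zero_of_involutive hU (σ := σ) (S := S) (R := R) ?_
    (Finset.filter_subset _ _) ?_ ?_ (hR ▸ hodd)
  · intro v
    apply Fin.ext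
    rw [hσ, hσ]
    split_ifs <;> omega
  · intro i hi
    simp only [Finset.mem_sdiff, Finset.mem_filter, R, not_and_or, not_le, not_lt] at hi
    have h1 := hsucc i (hwrap i hi.1)
    have h4 := hi.2.resolve_left (not_not.2 hi.1)
    have h2 := hleft i hi.1
    have h3 := hright i hi.1
    constructor <;> apply Fin.ext <;> rw [hσ] <;> split_ifs <;> omega
  · intro i hi
    simp only [Finset.mem_filter, R] at hi
    have h1 := hsucc i (hwrap i hi.1)
    have h2 : (σ (i + 1)).val + 1 < ℓ := by rw [hσ, h1]; split_ifs <;> omega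
    refine ⟨Fin.ext ?_, Finset.mem_filter.2 ⟨hrun _ ?_ ?_, ?_⟩⟩
    · rw [hsucc _ h2, hσ, hσ, h1]; split_ifs <;> omega
    all_goals rw [hσ, h1]; split_ifs <;> omega

lemma cycleIntegral_eq_zero_of_odd_card {U : ℝ → ℝ → ℝ}
    (hU : ∀ x ∈ Icc (0 : ℝ) 1, ∀ y ∈ Icc (0 : ℝ) 1, U x y = -U y x)
    {S : Finset (Fin ℓ)} (hS : Odd S.card) : cycleIntegral U S = 0 := by
  by_cases huniv : S = Finset.univ
  · subst huniv
    exact cycleIntegral_univ_eq_zero hU (by simpa using hS)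
  obtain ⟨g, hg⟩ : ∃ g, g ∉ S := by simpa [Finset.eq_univ_iff_forall] using huniv
  -- rotate the missing edge `g` to the last position `ℓ - 1`, so that no run wraps around
  let last : Fin ℓ := ⟨ℓ - 1, by have := NeZero.pos ℓ; omega⟩
  rw [← cycleIntegral_image_add_right U S (last - g)]
  set S' := S.image (· + (last - g))
  have hwrap : ∀ i ∈ S', i.val + 1 < ℓ := by
    intro i hi
    obtain ⟨j, hj, rfl⟩ := Finset.mem_image.1 hi
    have hne : j + (last - g) ≠ last := fun h =>
      hg (add_right_cancel (h.trans (add_sub_cancel g last).symm) ▸ hj)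
    have := (j + (last - g)).isLt
    have : (j + (last - g)).val ≠ ℓ - 1 := fun h => hne (Fin.ext h)
    omega
  have hcard : Odd (S'.image Fin.val).card := by
    rwa [Finset.card_image_of_injective _ Fin.val_injective,
      Finset.card_image_of_injective _ (add_left_injective _)]
  obtain ⟨a, b, hrun, hleft, hright, hodd⟩ := exists_maximal_run_of_odd_card _ hcard
  have hmem : ∀ n, n ∈ S'.image Fin.val ↔ ∃ i ∈ S', i.val = n := fun n => Finset.mem_image
  obtain ⟨i, hi, hib⟩ := (hmem _).1 (hrun (b - 1) (by have := hodd.pos; omega)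
    (by have := hodd.pos; omega))
  refine cycleIntegral_eq_zero_of_maximal_run hU (a := a) (b := b)
    (by have := hwrap i hi; omega) hwrap (fun j h₁ h₂ => ?_)
    (fun j hj => hleft _ ((hmem _).2 ⟨j, hj, rfl⟩))
    (fun j hj h => hright (h ▸ (hmem _).2 ⟨j, hj, rfl⟩)) hodd
  obtain ⟨k, hk, hkj⟩ := (hmem _).1 (hrun _ h₁ h₂)
  exact Fin.ext hkj ▸ hk

end Cycle

section CycleEdges

variable {ℓ : ℕ}

def IsCycleSubgraph (H : OrientedGraph (Fin ℓ)) : Prop :=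
  ∀ e ∈ H.edges, e.2.val = (e.1.val + 1) % ℓ ∨ e.1.val = (e.2.val + 1) % ℓ

lemma IsCycleSubgraph.snd_eq_or_fst_eq [NeZero ℓ] {H : OrientedGraph (Fin ℓ)}
    (hH : IsCycleSubgraph H) {e : Fin ℓ × Fin ℓ} (he : e ∈ H.edges) :
    e.2 = e.1 + 1 ∨ e.1 = e.2 + 1 := by
  have hval : ∀ i j : Fin ℓ, j.val = (i.val + 1) % ℓ → j = i + 1 := fun i j h =>
    Fin.ext (by rw [h, Fin.val_add, Fin.val_one', Nat.add_mod_mod])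
  exact (hH e he).imp (hval _ _) (hval _ _)

def cyclePosition [NeZero ℓ] (e : Fin ℓ × Fin ℓ) : Fin ℓ := if e.2 = e.1 + 1 then e.1 else e.2

lemma cyclePosition_injOn [NeZero ℓ] {H : OrientedGraph (Fin ℓ)} (hH : IsCycleSubgraph H) :
    Set.InjOn cyclePosition (H.edges : Set (Fin ℓ × Fin ℓ)) := by
  intro e he e' he' h
  have hmem : ∀ {d : Fin ℓ × Fin ℓ} {i j : Fin ℓ}, d ∈ H.edges → d.1 = i → d.2 = j →
      (i, j) ∈ H.edges := by
    rintro d i j hd rfl rfl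
    exact hd
  simp only [cyclePosition] at h
  split_ifs at h with h₁ h₂ h₂
  · exact Prod.ext h (by rw [h₁, h₂, h])
  · exact (H.antisymm _ _ (hmem he rfl h₁)
      (hmem he' (h ▸ (hH.snd_eq_or_fst_eq he').resolve_left h₂) h.symm)).elim
  · exact (H.antisymm _ _ (hmem he' rfl h₂)
      (hmem he (h ▸ (hH.snd_eq_or_fst_eq he).resolve_left h₁) h)).elim
  · exact Prod.ext (by rw [(hH.snd_eq_or_fst_eq he).resolve_left h₁,
      (hH.snd_eq_or_fst_eq he').resolve_left h₂, h]) h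

lemma prod_edges_eq_mul_prod_cyclePosition [NeZero ℓ] {H : OrientedGraph (Fin ℓ)}
    (hH : IsCycleSubgraph H) {U : ℝ → ℝ → ℝ}
    (hU : ∀ x ∈ Icc (0 : ℝ) 1, ∀ y ∈ Icc (0 : ℝ) 1, U x y = -U y x)
    {F : Finset (Fin ℓ × Fin ℓ)} (hF : F ⊆ H.edges) {x : Fin ℓ → ℝ}
    (hx : ∀ i, x i ∈ Icc (0 : ℝ) 1) :
    ∏ e ∈ F, U (x e.1) (x e.2) = (∏ e ∈ F, if e.2 = e.1 + 1 then 1 else -1) *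
      ∏ i ∈ F.image cyclePosition, U (x i) (x (i + 1)) := by
  rw [Finset.prod_image fun e he e' he' => cyclePosition_injOn hH (hF he) (hF he'),
    ← Finset.prod_mul_distrib]
  refine Finset.prod_congr rfl fun e he => ?_
  simp only [cyclePosition]
  split_ifs with h
  · rw [one_mul, ← h]
  · rw [(hH.snd_eq_or_fst_eq (hF he)).resolve_left h, hU _ (hx _) _ (hx _)]
    ring

lemma integral_prod_edges_eq_zero_of_odd_card {H : OrientedGraph (Fin ℓ)}
    (hH : IsCycleSubgraph H) {U : ℝ → ℝ → ℝ}
    (hU : ∀ x ∈ Icc (0 : ℝ) 1, ∀ y ∈ Icc (0 : ℝ) 1, U x y = -U y x)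
    {F : Finset (Fin ℓ × Fin ℓ)} (hF : F ⊆ H.edges) (hodd : Odd F.card) :
    ∫ x, ∏ e ∈ F, U (x e.1) (x e.2) ∂cubeMeasure (Fin ℓ) = 0 := by
  rcases Nat.eq_zero_or_pos ℓ with rfl | hℓ
  · simp [Finset.eq_empty_of_isEmpty F] at hodd
  have : NeZero ℓ := ⟨hℓ.ne'⟩
  have hcard : Odd (F.image cyclePosition).card := by
    rwa [Finset.card_image_of_injOn fun e he e' he' => cyclePosition_injOn hH (hF he) (hF he')]
  calc ∫ x, ∏ e ∈ F, U (x e.1) (x e.2) ∂cubeMeasure (Fin ℓ)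
      = ∫ x, (∏ e ∈ F, if e.2 = e.1 + 1 then (1 : ℝ) else -1) *
          ∏ i ∈ F.image cyclePosition, U (x i) (x (i + 1)) ∂cubeMeasure (Fin ℓ) := by
        refine integral_congr_ae ?_
        filter_upwards [ae_mem_cube] with x hx
        exact prod_edges_eq_mul_prod_cyclePosition hH hU hF hx
    _ = 0 := by
        rw [integral_const_mul, ← cycleIntegral, cycleIntegral_eq_zero_of_odd_card hU hcard,
          mul_zero]

lemma homDensity_const_sub_eq_const_add {H : OrientedGraph (Fin ℓ)} (hH : IsCycleSubgraph H)
    {U : ℝ → ℝ → ℝ} (hU : IsAntisymmetricKernel U) (c : ℝ) :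
    homDensity H (fun x y => c - U x y) = homDensity H (fun x y => c + U x y) := by
  obtain ⟨hUm, ⟨M, hUb⟩, hanti⟩ := hU
  have hexp := homDensity_add_mul_eq_sum H (A := fun _ _ => c) measurable_const hUm
    (fun _ _ _ _ => le_rfl) hUb
  have hneg : (fun x y => c - U x y) = fun x y => c + (-1) * U x y := by
    funext x y; ring
  have hpos : (fun x y => c + U x y) = fun x y => c + 1 * U x y := by
    funext x y; ring
  rw [hneg, hpos, hexp, hexp]
  refine Finset.sum_congr rfl fun F hF => ?_
  rcases Nat.even_or_odd F.card with heven | hodd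
  · rw [heven.neg_one_pow, one_pow]
  · rw [integral_mul_const,
      integral_prod_edges_eq_zero_of_odd_card hH hanti (Finset.mem_powerset.1 hF) hodd]
    simp

end CycleEdges

lemma lineMap_eq_add_mul_sub (W₁ W₂ : ℝ → ℝ → ℝ) (t : ℝ) :
    AffineMap.lineMap W₁ W₂ t = fun x y => W₁ x y + t * (W₂ x y - W₁ x y) := by
  ext x y
  simp only [AffineMap.lineMap_apply_module, Pi.add_apply, Pi.smul_apply, smul_eq_mul]
  ring

section Tournamenton

variable {W W₁ W₂ : ℝ → ℝ → ℝ}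

lemma _root_.IsTournamenton.abs_le_one (hW : IsTournamenton W) :
    ∀ x ∈ Icc (0 : ℝ) 1, ∀ y ∈ Icc (0 : ℝ) 1, |W x y| ≤ 1 := fun x hx y hy =>
  abs_le.2 ⟨by linarith [(hW.2.1 x hx y hy).1], (hW.2.1 x hx y hy).2⟩

lemma _root_.IsTournamenton.swap (hW : IsTournamenton W) : IsTournamenton fun x y => W y x :=
  ⟨hW.1.comp measurable_swap, fun x hx y hy => hW.2.1 y hy x hx,
    fun x hx y hy => (add_comm _ _).trans (hW.2.2 x hx y hy)⟩

lemma _root_.IsTournamenton.lineMap (h₁ : IsTournamenton W₁) (h₂ : IsTournamenton W₂) {t : ℝ}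
    (ht : t ∈ Icc (0 : ℝ) 1) : IsTournamenton (AffineMap.lineMap W₁ W₂ t) := by
  refine ⟨?_, fun x hx y hy => ?_, fun x hx y hy => ?_⟩
  · rw [lineMap_eq_add_mul_sub]
    exact h₁.1.add ((h₂.1.sub h₁.1).const_mul t)
  · obtain ⟨h₁₀, h₁₁⟩ := h₁.2.1 x hx y hy
    obtain ⟨h₂₀, h₂₁⟩ := h₂.2.1 x hx y hy
    simp only [lineMap_eq_add_mul_sub]
    constructor <;> nlinarith [ht.1, ht.2]
  · simp only [lineMap_eq_add_mul_sub]
    linear_combination (1 - t) * h₁.2.2 x hx y hy + t * h₂.2.2 x hx y hy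

lemma exists_homDensity_lineMap_eq {V : Type} [Fintype V] (H : OrientedGraph V)
    (h₁ : IsTournamenton W₁) (h₂ : IsTournamenton W₂) {c : ℝ}
    (hc₁ : homDensity H W₁ < c) (hc₂ : c < homDensity H W₂) :
    ∃ t ∈ Ioo (0 : ℝ) 1, homDensity H (AffineMap.lineMap W₁ W₂ t) = c := by
  have hB : ∀ x ∈ Icc (0 : ℝ) 1, ∀ y ∈ Icc (0 : ℝ) 1, |W₂ x y - W₁ x y| ≤ 1 := fun x hx y hy =>
    abs_le.2 ⟨by linarith [(h₁.2.1 x hx y hy).2, (h₂.2.1 x hx y hy).1],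
      by linarith [(h₁.2.1 x hx y hy).1, (h₂.2.1 x hx y hy).2]⟩
  have hcont : Continuous fun t : ℝ => homDensity H (AffineMap.lineMap W₁ W₂ t) := by
    simp_rw [lineMap_eq_add_mul_sub]
    exact continuous_homDensity_add_mul H h₁.1 (h₂.1.sub h₁.1) h₁.abs_le_one hB
  exact intermediate_value_Ioo zero_le_one hcont.continuousOn
    ⟨by simpa using hc₁, by simpa using hc₂⟩

lemma _root_.IsTournamenton.isAntisymmetricKernel_sub_half (hW : IsTournamenton W) :
    IsAntisymmetricKernel fun x y => W x y - 1 / 2 :=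
  ⟨hW.1.sub measurable_const,
    ⟨1 / 2, fun x hx y hy => abs_le.2
      ⟨by linarith [(hW.2.1 x hx y hy).1], by linarith [(hW.2.1 x hx y hy).2]⟩⟩,
    fun x hx y hy => by linarith [hW.2.2 x hx y hy]⟩

lemma homDensity_swap {ℓ : ℕ} {C : OrientedGraph (Fin ℓ)} (hC : IsCycleSubgraph C)
    (hW : IsTournamenton W) : homDensity C (fun x y => W y x) = homDensity C W :=
  calc homDensity C (fun x y => W y x)
      = homDensity C (fun x y => 1 / 2 - (W x y - 1 / 2)) := by
        refine homDensity_congr_ae C ?_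
        filter_upwards [ae_squareMeasure_mem] with p hp
        linarith [hW.2.2 p.1 hp.1 p.2 hp.2]
    _ = homDensity C (fun x y => 1 / 2 + (W x y - 1 / 2)) :=
        homDensity_const_sub_eq_const_add hC hW.isAntisymmetricKernel_sub_half _
    _ = homDensity C W := by simp

lemma not_ae_lineMap_swap_eq_half (h₁ : IsTournamenton W₁)
    (hW₁ : ¬ ∀ᵐ p ∂squareMeasure, W₁ p.1 p.2 = 1 / 2) {θ s : ℝ} (hθ : θ ∈ Ioo (0 : ℝ) 1)
    (hs : s ∈ Icc (0 : ℝ) 1)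
    (hθhalf : ∀ᵐ p ∂squareMeasure, AffineMap.lineMap W₁ W₂ θ p.1 p.2 = 1 / 2) :
    ¬ ∀ᵐ p ∂squareMeasure, AffineMap.lineMap (fun x y => W₁ y x) W₂ s p.1 p.2 = 1 / 2 := by
  intro hshalf
  refine hW₁ ?_
  filter_upwards [ae_squareMeasure_mem, hθhalf, hshalf] with p hp hθp hsp
  simp only [lineMap_eq_add_mul_sub] at hθp hsp
  have hswap := h₁.2.2 p.1 hp.1 p.2 hp.2
  have hκ : 0 < θ * (1 - s) + s * (1 - θ) := by
    nlinarith [mul_pos hθ.1 (sub_pos.2 hθ.2), mul_nonneg (mul_self_nonneg θ) (sub_nonneg.2 hs.2),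
      mul_nonneg hs.1 (mul_self_nonneg (1 - θ))]
  -- `θ (W₂ - 1/2) = (1 - θ) (1/2 - W₁)` and `W₁ᵀ - 1/2 = 1/2 - W₁`, so the second segment at `s`
  -- is `1/2 + κ (1/2 - W₁) / θ` with `κ > 0`
  have hzero : (1 / 2 - W₁ p.1 p.2) * (θ * (1 - s) + s * (1 - θ)) = 0 := by
    linear_combination θ * hsp - s * hθp - θ * (1 - s) * hswap
  linarith [(mul_eq_zero.1 hzero).resolve_right hκ.ne']

end Tournamenton

end QuasirandomCycle

open QuasirandomCycle

theorem not_quasirandomForcing_of_lt_gt_general (ℓ : ℕ)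
    (C : OrientedGraph (Fin ℓ)) (hC : IsCycleOrientation C)
    (W₁ W₂ : ℝ → ℝ → ℝ) (h₁ : IsTournamenton W₁) (h₂ : IsTournamenton W₂)
    (hlt : homDensity C W₁ < (1 / 2 : ℝ) ^ C.edges.card)
    (hgt : (1 / 2 : ℝ) ^ C.edges.card < homDensity C W₂) :
    ∃ W : ℝ → ℝ → ℝ, IsTournamenton W ∧
      ¬ (∀ᵐ p : ℝ × ℝ ∂squareMeasure, W p.1 p.2 = 1 / 2) ∧
      homDensity C W = (1 / 2 : ℝ) ^ C.edges.card := by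
  obtain ⟨θ, hθ, hθC⟩ := exists_homDensity_lineMap_eq C h₁ h₂ hlt hgt
  by_cases hθhalf : ∀ᵐ p ∂squareMeasure, AffineMap.lineMap W₁ W₂ θ p.1 p.2 = 1 / 2
  · have hW₁ : ¬ ∀ᵐ p ∂squareMeasure, W₁ p.1 p.2 = 1 / 2 := fun h =>
      hlt.ne (by rw [homDensity_congr_ae C (K₂ := fun _ _ => 1 / 2) h, homDensity_const])
    have hlt' : homDensity C (fun x y => W₁ y x) < (1 / 2 : ℝ) ^ C.edges.card := by
      rwa [homDensity_swap hC.1 h₁]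
    obtain ⟨s, hs, hsC⟩ := exists_homDensity_lineMap_eq C h₁.swap h₂ hlt' hgt
    exact ⟨_, h₁.swap.lineMap h₂ (Set.Ioo_subset_Icc_self hs),
      not_ae_lineMap_swap_eq_half h₁ hW₁ hθ (Set.Ioo_subset_Icc_self hs) hθhalf, hsC⟩
  · exact ⟨_, h₁.lineMap h₂ (Set.Ioo_subset_Icc_self hθ), hθhalf, hθC⟩

/-- if there are tournamentons with density of `C` below and above `2^{-‖C‖}`,
then `C` is not quasirandom-forcing. -/
theorem not_quasirandomForcing_of_lt_gt (ℓ : ℕ) (hℓ : 3 ≤ ℓ)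
    (C : OrientedGraph (Fin ℓ)) (hC : IsCycleOrientation C)
    (W₁ W₂ : ℝ → ℝ → ℝ) (h₁ : IsTournamenton W₁) (h₂ : IsTournamenton W₂)
    (hlt : homDensity C W₁ < (1 / 2 : ℝ) ^ C.edges.card)
    (hgt : (1 / 2 : ℝ) ^ C.edges.card < homDensity C W₂) :
    ∃ W : ℝ → ℝ → ℝ, IsTournamenton W ∧
      ¬ (∀ᵐ p : ℝ × ℝ ∂squareMeasure, W p.1 p.2 = 1 / 2) ∧
      homDensity C W = (1 / 2 : ℝ) ^ C.edges.card :=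
  not_quasirandomForcing_of_lt_gt_general ℓ C hC W₁ W₂ h₁ h₂ hlt hgt
end
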